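/- arXiv:2510.20934 — 7 statements merged into one kernel-verified Lean document; each statement's English description precedes it below -/
import Mathlib

section
/- Let {λₙ}ₙ≥₀ be a strictly increasing sequence of non-negative integers with λ₀ = 0 and λₙ₊₁ > 3λₙ for n ≥ 1. Let A = {±λₙ}. Suppose D = n₁ + n₂ + n₃ = n₄ + n₅ + n₆ with all nᵢ ∈ A, where the multisets {n₁,n₂,n₃} and {n₄,n₅,n₆} are distinct and neither side contains a pair summing to zero in a way making the representation trivial. Then after rearranging all terms to have positive entries on both sides, the maximal element on one side is λₙ₊₁ and the maximal element on the other side is λₙ. -/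
/-- The symmetrized spectrum `A = {±λₙ}`. -/
def lacSet (lam : ℕ → ℕ) : Set ℤ := {x : ℤ | ∃ n : ℕ, x = (lam n : ℤ) ∨ x = -(lam n : ℤ)}

/-- A three-term representation is trivial if it contains a pair `{m, -m}`
(so it has the form `D + m - m`). -/
def TrivialTriple (s : Multiset ℤ) : Prop := ∃ m : ℤ, ({m, -m} : Multiset ℤ) ≤ s

/-- After rearranging the equation `a + b + c = d + e + f` so that all entries on both
sides are positive, this is the (multiset of) positive entries on the left-hand side. -/
def posSide (a b c d e f : ℤ) : Multiset ℕ :=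
  (({a, b, c} : Multiset ℤ).filter (fun x => 0 < x)).map Int.toNat
    + (({d, e, f} : Multiset ℤ).filter (fun x => x < 0)).map (fun x => (-x).toNat)

open Multiset

lemma msup_mem {s : Multiset ℕ} (hs : s ≠ 0) : s.sup ∈ s := by
  induction s using Multiset.induction_on with
  | empty => simp at hs
  | cons a t ih =>
    rw [Multiset.sup_cons]
    rcases eq_or_ne t 0 with rfl | ht
    · simp
    · rcases le_total a t.sup with h | h
      · rw [sup_eq_right.2 h]; exact Multiset.mem_cons_of_mem (ih ht)
      · rw [sup_eq_left.2 h]; exact Multiset.mem_cons_self a t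

section
variable (lam : ℕ → ℕ) (h0 : lam 0 = 0) (hmono : StrictMono lam)
    (hlac : ∀ n, 1 ≤ n → 3 * lam n < lam (n + 1))

include h0 hmono hlac

set_option linter.unusedSectionVars false

lemma contra'' (R S : Multiset ℕ) (hS : ∀ y ∈ S, ∃ j, 1 ≤ j ∧ y = lam j)
    (hsum : R.sum = S.sum) (hSne : S ≠ 0) (hcard : S.card ≤ 3)
    (m : ℕ) (hm : lam m ∈ R) (hlt : ∀ y ∈ S, y < lam m) : False := by
  obtain ⟨y₀, hy₀⟩ := exists_mem_of_ne_zero hSne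
  obtain ⟨j₀, hj₀, rfl⟩ := hS y₀ hy₀
  have hjm : j₀ < m := hmono.lt_iff_lt.mp (hlt _ hy₀)
  have hm2 : 2 ≤ m := by omega
  have hb : ∀ y ∈ S, y ≤ lam (m - 1) := by
    intro y hy
    obtain ⟨j, hj, rfl⟩ := hS y hy
    have : j < m := hmono.lt_iff_lt.mp (hlt _ hy)
    exact hmono.monotone (by omega)
  have h1 : S.sum ≤ S.card * lam (m - 1) := by
    have := Multiset.sum_le_card_nsmul S (lam (m - 1)) hb
    simpa [smul_eq_mul] using this
  have h2 : 3 * lam (m - 1) < lam m := by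
    have := hlac (m - 1) (by omega)
    have hprev : m - 1 + 1 = m := by omega
    rwa [hprev] at this
  have h3 : lam m ≤ R.sum := Multiset.single_le_sum (fun x _ => Nat.zero_le x) _ hm
  have : S.card * lam (m-1) ≤ 3 * lam (m-1) := Nat.mul_le_mul_right _ hcard
  omega

lemma contraD (R S : Multiset ℕ)
    (hR : ∀ x ∈ R, ∃ k, 1 ≤ k ∧ x = lam k) (hS : ∀ y ∈ S, ∃ j, 1 ≤ j ∧ y = lam j)
    (hsum : R.sum = S.sum) (hRne : R ≠ 0) (hSne : S ≠ 0)
    (hcard : R.card + S.card ≤ 4)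
    (hdisj : ∀ x, x ∈ R → x ∈ S → False) : False := by
  have hRc : 1 ≤ R.card := Multiset.card_pos.mpr hRne
  have hSc : 1 ≤ S.card := Multiset.card_pos.mpr hSne
  have hne : R + S ≠ 0 := Multiset.card_pos.1 (by rw [Multiset.card_add]; omega)
  have hmem := msup_mem hne
  rw [Multiset.mem_add] at hmem
  rcases hmem with h | h
  · obtain ⟨m, _, hml⟩ := hR _ h
    refine contra'' lam h0 hmono hlac R S hS hsum hSne (by omega) m (hml ▸ h) ?_
    intro y hy
    have hle : y ≤ (R + S).sup := Multiset.le_sup (Multiset.mem_add.mpr (Or.inr hy))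
    have : y ≠ (R + S).sup := by
      intro heq; exact hdisj _ (heq ▸ h) hy
    rw [hml] at hle this
    omega
  · obtain ⟨m, _, hml⟩ := hS _ h
    refine contra'' lam h0 hmono hlac S R hR hsum.symm hRne (by omega) m (hml ▸ h) ?_
    intro y hy
    have hle : y ≤ (R + S).sup := Multiset.le_sup (Multiset.mem_add.mpr (Or.inl hy))
    have : y ≠ (R + S).sup := by
      intro heq; exact hdisj _ hy (heq ▸ h)
    rw [hml] at hle this
    omega

lemma key' (P Q : Multiset ℕ)
    (hP : ∀ x ∈ P, ∃ k, 1 ≤ k ∧ x = lam k) (hQ : ∀ y ∈ Q, ∃ j, 1 ≤ j ∧ y = lam j)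
    (hsum : P.sum = Q.sum) (hcard : P.card + Q.card ≤ 6) (hne : P ≠ Q)
    (hle : Q.sup ≤ P.sup) :
    ∃ n, 1 ≤ n ∧ P.sup = lam (n + 1) ∧ Q.sup = lam n := by
  have hposel : ∀ (s : Multiset ℕ), (∀ x ∈ s, ∃ k, 1 ≤ k ∧ x = lam k) → s ≠ 0 → 0 < s.sum := by
    intro s hs hsne
    obtain ⟨x, hx⟩ := exists_mem_of_ne_zero hsne
    obtain ⟨k, hk, rfl⟩ := hs x hx
    have h1 : lam k ≤ s.sum := Multiset.single_le_sum (fun x _ => Nat.zero_le x) _ hx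
    have h2 : lam 0 < lam k := hmono (by omega)
    omega
  have hPne : P ≠ 0 := by
    rintro rfl
    apply hne
    rcases eq_or_ne Q 0 with rfl | hQ0
    · rfl
    · exact absurd hsum.symm (by have := hposel Q hQ hQ0; simp; omega)
  have hQne : Q ≠ 0 := by
    rintro rfl
    apply hne
    have := hposel P hP hPne
    simp [hsum] at this
  have htop : P.sup ∉ Q := by
    intro hPQ
    have hPsup := msup_mem hPne
    set t := P.sup with ht
    set P₁ := P.erase t with hP₁
    set Q₁ := Q.erase t with hQ₁
    have hPc : t ::ₘ P₁ = P := Multiset.cons_erase hPsup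
    have hQc : t ::ₘ Q₁ = Q := Multiset.cons_erase hPQ
    have hsum₁ : P₁.sum = Q₁.sum := by
      have h1 : P.sum = t + P₁.sum := by rw [← hPc, Multiset.sum_cons]
      have h2 : Q.sum = t + Q₁.sum := by rw [← hQc, Multiset.sum_cons]
      omega
    have hne₁ : P₁ ≠ Q₁ := by
      intro h; apply hne; rw [← hPc, ← hQc, h]
    have hcard₁ : P₁.card + Q₁.card ≤ 4 := by
      have h1 : P.card = P₁.card + 1 := by rw [← hPc]; simp
      have h2 : Q.card = Q₁.card + 1 := by rw [← hQc]; simp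
      omega
    have hP₁el : ∀ x ∈ P₁, ∃ k, 1 ≤ k ∧ x = lam k :=
      fun x hx => hP x (Multiset.mem_of_mem_erase hx)
    have hQ₁el : ∀ x ∈ Q₁, ∃ k, 1 ≤ k ∧ x = lam k :=
      fun x hx => hQ x (Multiset.mem_of_mem_erase hx)
    set P₂ := P₁ - Q₁ with hP₂
    set Q₂ := Q₁ - P₁ with hQ₂
    have hsum₂ : P₂.sum = Q₂.sum := by
      have e1 : P₂ + P₁ ∩ Q₁ = P₁ := Multiset.sub_add_inter P₁ Q₁
      have e2 : Q₂ + Q₁ ∩ P₁ = Q₁ := Multiset.sub_add_inter Q₁ P₁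
      have e3 : Q₁ ∩ P₁ = P₁ ∩ Q₁ := Multiset.inter_comm _ _
      have s1 : P₂.sum + (P₁ ∩ Q₁).sum = P₁.sum := by rw [← Multiset.sum_add, e1]
      have s2 : Q₂.sum + (P₁ ∩ Q₁).sum = Q₁.sum := by rw [← Multiset.sum_add, ← e3, e2]
      omega
    have hsub : ∀ (A B : Multiset ℕ), A - B = 0 → A.sum = B.sum →
        (∀ x ∈ B, ∃ k, 1 ≤ k ∧ x = lam k) → A = B := by
      intro A B hAB hABsum hBel
      have hle' : A ≤ B := tsub_eq_zero_iff_le.mp hAB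
      have : B - A + A = B := tsub_add_cancel_of_le hle'
      have hz : (B - A).sum = 0 := by
        have : (B - A).sum + A.sum = B.sum := by rw [← Multiset.sum_add, ‹B - A + A = B›]
        omega
      have hBA : B - A = 0 := by
        by_contra hne'
        have := hposel (B - A) (fun x hx => hBel x (Multiset.mem_of_le (tsub_le_self) hx)) hne'
        omega
      rw [← ‹B - A + A = B›, hBA, zero_add]
    have hP₂ne : P₂ ≠ 0 := by
      intro h; exact hne₁ (hsub P₁ Q₁ h hsum₁ hQ₁el)
    have hQ₂ne : Q₂ ≠ 0 := by
      intro h; exact hne₁ ((hsub Q₁ P₁ h hsum₁.symm hP₁el)).symm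
    have hdisj : ∀ x, x ∈ P₂ → x ∈ Q₂ → False := by
      intro x hx1 hx2
      rw [hP₂, ← Multiset.count_pos, Multiset.count_sub] at hx1
      rw [hQ₂, ← Multiset.count_pos, Multiset.count_sub] at hx2
      omega
    have hcard₂ : P₂.card + Q₂.card ≤ 4 := by
      have c1 : P₂.card ≤ P₁.card := Multiset.card_le_card (tsub_le_self)
      have c2 : Q₂.card ≤ Q₁.card := Multiset.card_le_card (tsub_le_self)
      omega
    exact contraD lam h0 hmono hlac P₂ Q₂
      (fun x hx => hP₁el x (Multiset.mem_of_le tsub_le_self hx))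
      (fun x hx => hQ₁el x (Multiset.mem_of_le tsub_le_self hx))
      hsum₂ hP₂ne hQ₂ne hcard₂ hdisj
  obtain ⟨M, hM1, hMl⟩ := hP _ (msup_mem hPne)
  obtain ⟨j, hj1, hjl⟩ := hQ _ (msup_mem hQne)
  have hlt : Q.sup < P.sup := by
    rcases lt_or_eq_of_le hle with h | h
    · exact h
    · exact absurd (h ▸ msup_mem hQne) htop
  have hjM : j < M := by
    rw [hMl, hjl] at hlt; exact hmono.lt_iff_lt.mp hlt
  have hM2 : 2 ≤ M := by omega
  obtain ⟨m, rfl⟩ : ∃ m, M = m + 2 := ⟨M - 2, by omega⟩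
  have hj' : j = m + 1 := by
    by_contra hjne
    have hjm : j ≤ m := by omega
    have hb : ∀ y ∈ Q, y ≤ lam m := by
      intro y hy
      have h1 : y ≤ Q.sup := Multiset.le_sup hy
      have h2 : lam j ≤ lam m := hmono.monotone hjm
      omega
    have h1 : Q.sum ≤ Q.card * lam m := by
      have := Multiset.sum_le_card_nsmul Q (lam m) hb
      simpa [smul_eq_mul] using this
    have hQc : Q.card ≤ 5 := by
      have := Multiset.card_pos.mpr hPne; omega
    have h3 : lam (m + 2) ≤ P.sum := by
      rw [← hMl]; exact Multiset.single_le_sum (fun x _ => Nat.zero_le x) _ (msup_mem hPne)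
    rcases Nat.eq_zero_or_pos m with rfl | hm1
    · have : Q.card * lam 0 = 0 := by rw [h0]; ring
      have hQpos := hposel Q hQ hQne
      omega
    · have ha := hlac m hm1
      have hb' : 3 * lam (m + 1) < lam (m + 2) := hlac (m + 1) (by omega)
      have : Q.card * lam m ≤ 5 * lam m := Nat.mul_le_mul_right _ hQc
      omega
  exact ⟨m + 1, by omega, by rw [hMl], by rw [hjl, hj']⟩

end

lemma sum_identity (s : Multiset ℤ) :
    ((((s.filter (fun x => 0 < x)).map Int.toNat).sum : ℕ) : ℤ)
      = s.sum + ((((s.filter (fun x => x < 0)).map (fun x => (-x).toNat)).sum : ℕ) : ℤ) := by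
  induction s using Multiset.induction_on with
  | empty => simp
  | cons a t ih =>
    rcases lt_trichotomy a 0 with h | h | h
    · rw [Multiset.filter_cons_of_neg _ (by simp; omega),
        Multiset.filter_cons_of_pos _ (by simpa using h)]
      simp only [Multiset.map_cons, Multiset.sum_cons]
      push_cast [Int.toNat_of_nonneg (by omega : (0:ℤ) ≤ -a)]
      push_cast at ih
      omega
    · subst h
      rw [Multiset.filter_cons_of_neg _ (by simp), Multiset.filter_cons_of_neg _ (by simp)]
      simpa using ih
    · rw [Multiset.filter_cons_of_pos _ (by simpa using h),
        Multiset.filter_cons_of_neg _ (by simp; omega)]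
      simp only [Multiset.map_cons, Multiset.sum_cons]
      push_cast [Int.toNat_of_nonneg (le_of_lt h)]
      push_cast at ih
      omega

lemma count_pos_part (s : Multiset ℤ) (v : ℕ) (hv : 0 < v) :
    Multiset.count v ((s.filter (fun x => 0 < x)).map Int.toNat)
      = Multiset.count ((v : ℤ)) s := by
  rw [Multiset.count_map]
  rw [Multiset.count_eq_card_filter_eq, Multiset.filter_filter]
  congr 1
  apply Multiset.filter_congr
  intro x _
  constructor
  · rintro ⟨h1, h2⟩; omega
  · intro h; constructor <;> omega

lemma count_neg_part (s : Multiset ℤ) (v : ℕ) (hv : 0 < v) :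
    Multiset.count v ((s.filter (fun x => x < 0)).map (fun x => (-x).toNat))
      = Multiset.count (-(v : ℤ)) s := by
  rw [Multiset.count_map]
  rw [Multiset.count_eq_card_filter_eq, Multiset.filter_filter]
  congr 1
  apply Multiset.filter_congr
  intro x _
  constructor
  · rintro ⟨h1, h2⟩; omega
  · intro h; constructor <;> omega

lemma card_filter_bound (s : Multiset ℤ) :
    (s.filter (fun x => 0 < x)).card + (s.filter (fun x => x < 0)).card ≤ s.card := by
  have h1 : s.filter (fun x => 0 < x) ≤ s.filter (fun x => ¬ x < 0) := by
    apply Multiset.monotone_filter_right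
    intro x hx; omega
  have h2 := Multiset.filter_add_not (fun x => x < 0) s
  have h3 := congrArg Multiset.card h2
  rw [Multiset.card_add] at h3
  have h4 := Multiset.card_le_card h1
  omega

lemma posSide_mem (lam : ℕ → ℕ) (h0 : lam 0 = 0)
    {a b c d e f : ℤ}
    (ha : a ∈ lacSet lam) (hb : b ∈ lacSet lam) (hc : c ∈ lacSet lam)
    (hd : d ∈ lacSet lam) (he : e ∈ lacSet lam) (hf : f ∈ lacSet lam) :
    ∀ x ∈ posSide a b c d e f, ∃ k, 1 ≤ k ∧ x = lam k := by
  intro x hx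
  rw [posSide, Multiset.mem_add] at hx
  rcases hx with hx | hx
  · rw [Multiset.mem_map] at hx
    obtain ⟨y, hy, rfl⟩ := hx
    rw [Multiset.mem_filter] at hy
    obtain ⟨hy1, hy2⟩ := hy
    have hyA : y ∈ lacSet lam := by
      simp only [Multiset.insert_eq_cons, Multiset.mem_cons, Multiset.mem_singleton] at hy1
      rcases hy1 with rfl | rfl | rfl <;> assumption
    obtain ⟨k, hk | hk⟩ := hyA
    · refine ⟨k, ?_, ?_⟩
      · by_contra hk1
        have : k = 0 := by omega
        subst this; rw [h0] at hk; simp at hk; omega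
      · rw [hk]; simp
    · exfalso; have : (0:ℤ) ≤ lam k := by positivity
      omega
  · rw [Multiset.mem_map] at hx
    obtain ⟨y, hy, rfl⟩ := hx
    rw [Multiset.mem_filter] at hy
    obtain ⟨hy1, hy2⟩ := hy
    have hyA : y ∈ lacSet lam := by
      simp only [Multiset.insert_eq_cons, Multiset.mem_cons, Multiset.mem_singleton] at hy1
      rcases hy1 with rfl | rfl | rfl <;> assumption
    obtain ⟨k, hk | hk⟩ := hyA
    · exfalso; have : (0:ℤ) ≤ lam k := by positivity
      omega
    · refine ⟨k, ?_, ?_⟩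
      · by_contra hk1
        have : k = 0 := by omega
        subst this; rw [h0] at hk; simp at hk; omega
      · rw [hk]; simp

lemma triv_of_counts {s : Multiset ℤ} {m : ℤ} (hm : m ≠ -m)
    (h1 : 1 ≤ Multiset.count m s) (h2 : 1 ≤ Multiset.count (-m) s) : TrivialTriple s := by
  refine ⟨m, ?_⟩
  rw [Multiset.le_iff_count]
  intro a
  have hc : Multiset.count a ({m, -m} : Multiset ℤ)
      = (if a = m then 1 else 0) + (if a = -m then 1 else 0) := by
    simp [Multiset.insert_eq_cons, Multiset.count_cons, Multiset.count_singleton]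
    omega
  rw [hc]
  by_cases e1 : a = m
  · subst e1
    rw [if_pos rfl, if_neg hm]
    omega
  · rw [if_neg e1]
    by_cases e2 : a = -m
    · subst e2; rw [if_pos rfl]; omega
    · rw [if_neg e2]; omega

lemma posSide_count (a b c d e f : ℤ) (v : ℕ) (hv : 0 < v) :
    Multiset.count v (posSide a b c d e f)
      = Multiset.count ((v:ℤ)) ({a,b,c} : Multiset ℤ)
        + Multiset.count (-(v:ℤ)) ({d,e,f} : Multiset ℤ) := by
  rw [posSide, Multiset.count_add, count_pos_part _ _ hv, count_neg_part _ _ hv]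

lemma triple_eq (n₁ n₂ n₃ n₄ n₅ n₆ : ℤ)
    (hnt₁ : ¬ TrivialTriple {n₁, n₂, n₃}) (hnt₂ : ¬ TrivialTriple {n₄, n₅, n₆})
    (hPQ : posSide n₁ n₂ n₃ n₄ n₅ n₆ = posSide n₄ n₅ n₆ n₁ n₂ n₃) :
    ({n₁, n₂, n₃} : Multiset ℤ) = {n₄, n₅, n₆} := by
  set L : Multiset ℤ := {n₁, n₂, n₃} with hL
  set R : Multiset ℤ := {n₄, n₅, n₆} with hR
  have hkey : ∀ x : ℤ, x ≠ 0 → Multiset.count x L = Multiset.count x R := by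
    have hv : ∀ v : ℕ, 0 < v → Multiset.count ((v:ℤ)) L = Multiset.count ((v:ℤ)) R ∧
        Multiset.count (-(v:ℤ)) L = Multiset.count (-(v:ℤ)) R := by
      intro v hvpos
      have h := congrArg (Multiset.count v) hPQ
      rw [posSide_count _ _ _ _ _ _ v hvpos, posSide_count _ _ _ _ _ _ v hvpos,
        ← hL, ← hR] at h
      have hvz : (0:ℤ) < (v:ℤ) := by exact_mod_cast hvpos
      have hvne : (v:ℤ) ≠ -(v:ℤ) := by omega
      have hLc : Multiset.count ((v:ℤ)) L = 0 ∨ Multiset.count (-(v:ℤ)) L = 0 := by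
        by_contra hcon
        push_neg at hcon
        exact hnt₁ (triv_of_counts hvne (by omega) (by omega))
      have hRc : Multiset.count ((v:ℤ)) R = 0 ∨ Multiset.count (-(v:ℤ)) R = 0 := by
        by_contra hcon
        push_neg at hcon
        exact hnt₂ (triv_of_counts hvne (by omega) (by omega))
      omega
    intro x hx
    rcases lt_or_gt_of_ne hx with h | h
    · have hv' := hv (-x).toNat (by omega)
      rw [Int.toNat_of_nonneg (by omega : (0:ℤ) ≤ -x), neg_neg] at hv'
      exact hv'.2
    · have hv' := hv x.toNat (by omega)
      rw [Int.toNat_of_nonneg (by omega : (0:ℤ) ≤ x)] at hv'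
      exact hv'.1
  have hfilter : L.filter (fun x => ¬ (0:ℤ) = x) = R.filter (fun x => ¬ (0:ℤ) = x) := by
    apply Multiset.ext.mpr
    intro a
    rw [Multiset.count_filter, Multiset.count_filter]
    split_ifs with h
    · rfl
    · exact hkey a (fun hh => h hh.symm)
  have hzero : Multiset.count (0:ℤ) L = Multiset.count (0:ℤ) R := by
    have e1 := congrArg Multiset.card (Multiset.filter_add_not (fun x => (0:ℤ) = x) L)
    have e2 := congrArg Multiset.card (Multiset.filter_add_not (fun x => (0:ℤ) = x) R)
    rw [Multiset.card_add] at e1 e2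
    have c1 : Multiset.count (0:ℤ) L = (L.filter (fun x => (0:ℤ) = x)).card :=
      Multiset.count_eq_card_filter_eq _ _
    have c2 : Multiset.count (0:ℤ) R = (R.filter (fun x => (0:ℤ) = x)).card :=
      Multiset.count_eq_card_filter_eq _ _
    have hcL : L.card = 3 := by rw [hL]; rfl
    have hcR : R.card = 3 := by rw [hR]; rfl
    rw [hfilter] at e1
    omega
  apply Multiset.ext.mpr
  intro a
  by_cases ha : a = 0
  · subst ha; exact hzero
  · exact hkey a ha

theorem stmt_2 (lam : ℕ → ℕ) (h0 : lam 0 = 0) (hmono : StrictMono lam)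
    (hlac : ∀ n, 1 ≤ n → 3 * lam n < lam (n + 1))
    (n₁ n₂ n₃ n₄ n₅ n₆ : ℤ)
    (h₁ : n₁ ∈ lacSet lam) (h₂ : n₂ ∈ lacSet lam) (h₃ : n₃ ∈ lacSet lam)
    (h₄ : n₄ ∈ lacSet lam) (h₅ : n₅ ∈ lacSet lam) (h₆ : n₆ ∈ lacSet lam)
    (hsum : n₁ + n₂ + n₃ = n₄ + n₅ + n₆)
    (hdist : ({n₁, n₂, n₃} : Multiset ℤ) ≠ {n₄, n₅, n₆})
    (hnt₁ : ¬ TrivialTriple {n₁, n₂, n₃}) (hnt₂ : ¬ TrivialTriple {n₄, n₅, n₆}) :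
    ∃ n : ℕ, 1 ≤ n ∧
      (((posSide n₁ n₂ n₃ n₄ n₅ n₆).sup = lam (n + 1) ∧
        (posSide n₄ n₅ n₆ n₁ n₂ n₃).sup = lam n) ∨
       ((posSide n₄ n₅ n₆ n₁ n₂ n₃).sup = lam (n + 1) ∧
        (posSide n₁ n₂ n₃ n₄ n₅ n₆).sup = lam n)) := by
  have hPel := posSide_mem lam h0 h₁ h₂ h₃ h₄ h₅ h₆
  have hQel := posSide_mem lam h0 h₄ h₅ h₆ h₁ h₂ h₃
  have hsumLR : ({n₁,n₂,n₃} : Multiset ℤ).sum = ({n₄,n₅,n₆} : Multiset ℤ).sum := by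
    simp only [Multiset.insert_eq_cons, Multiset.sum_cons, Multiset.sum_singleton]
    omega
  have hsum' : (posSide n₁ n₂ n₃ n₄ n₅ n₆).sum = (posSide n₄ n₅ n₆ n₁ n₂ n₃).sum := by
    have hZ : ((posSide n₁ n₂ n₃ n₄ n₅ n₆).sum : ℤ)
        = ((posSide n₄ n₅ n₆ n₁ n₂ n₃).sum : ℤ) := by
      rw [posSide, posSide, Multiset.sum_add, Multiset.sum_add]
      have hsL := sum_identity ({n₁,n₂,n₃} : Multiset ℤ)
      have hsR := sum_identity ({n₄,n₅,n₆} : Multiset ℤ)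
      push_cast
      push_cast at hsL hsR
      omega
    exact_mod_cast hZ
  have hcard' : (posSide n₁ n₂ n₃ n₄ n₅ n₆).card + (posSide n₄ n₅ n₆ n₁ n₂ n₃).card ≤ 6 := by
    rw [posSide, posSide, Multiset.card_add, Multiset.card_add,
      Multiset.card_map, Multiset.card_map, Multiset.card_map, Multiset.card_map]
    have b1 := card_filter_bound ({n₁,n₂,n₃} : Multiset ℤ)
    have b2 := card_filter_bound ({n₄,n₅,n₆} : Multiset ℤ)
    have c1 : ({n₁,n₂,n₃} : Multiset ℤ).card = 3 := rfl
    have c2 : ({n₄,n₅,n₆} : Multiset ℤ).card = 3 := rfl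
    omega
  have hne : posSide n₁ n₂ n₃ n₄ n₅ n₆ ≠ posSide n₄ n₅ n₆ n₁ n₂ n₃ :=
    fun h => hdist (triple_eq _ _ _ _ _ _ hnt₁ hnt₂ h)
  rcases le_total (posSide n₄ n₅ n₆ n₁ n₂ n₃).sup (posSide n₁ n₂ n₃ n₄ n₅ n₆).sup with h | h
  · obtain ⟨n, hn, e1, e2⟩ := key' lam h0 hmono hlac _ _ hPel hQel hsum' hcard' hne h
    exact ⟨n, hn, Or.inl ⟨e1, e2⟩⟩
  · obtain ⟨n, hn, e1, e2⟩ := key' lam h0 hmono hlac _ _ hQel hPel hsum'.symm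
      (by omega) hne.symm h
    exact ⟨n, hn, Or.inr ⟨e1, e2⟩⟩
end

section
/- Let {λₙ} be a sequence of non-negative integers with λ₀ = 0, λ₁ > 0, and λₙ₊₁ > 3λₙ for n ≥ 1, and let A = {±λₙ}. If D ∈ A + A + A admits two genuinely different (non-trivial, distinct modulo permutation) representations as a sum of three elements of A, then D admits exactly two such representations modulo permutation, and at least one of the two representing triples contains a repeated element. -/
set_option maxHeartbeats 1000000


/-- `s` is a representation of `D` as a sum of three elements of `A`
(representations are identified modulo permutation, i.e. are multisets). -/
def IsRep (A : Set ℤ) (D : ℤ) (s : Multiset ℤ) : Prop :=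
  Multiset.card s = 3 ∧ (∀ x ∈ s, x ∈ A) ∧ s.sum = D

/-- `D` is a P(3) exception for `A`: it admits two genuinely different
(distinct modulo permutation, non-trivial) three-term representations. -/
def IsP3Exception (A : Set ℤ) (D : ℤ) : Prop :=
  ∃ s t : Multiset ℤ, IsRep A D s ∧ IsRep A D t ∧
    ¬ TrivialTriple s ∧ ¬ TrivialTriple t ∧ s ≠ t


lemma sw12 (a b c : ℤ) : ({a,b,c} : Multiset ℤ) = {b,a,c} := Multiset.cons_swap a b {c}
lemma sw23 (a b c : ℤ) : ({a,b,c} : Multiset ℤ) = {a,c,b} :=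
  congrArg (a ::ₘ ·) (Multiset.cons_swap b c 0)
lemma psw (a b : ℤ) : ({a,b} : Multiset ℤ) = {b,a} := Multiset.cons_swap a b 0

lemma pair_eq {a b c d : ℤ} (h : ({a,b}:Multiset ℤ) = {c,d}) :
    (a = c ∧ b = d) ∨ (a = d ∧ b = c) := by
  have ha : a ∈ ({c,d}:Multiset ℤ) := h ▸ Multiset.mem_cons_self a {b}
  rcases (by simpa using ha : a = c ∨ a = d) with h1 | h1
  · subst h1
    left
    exact ⟨rfl, by simpa using (Multiset.cons_inj_right a).mp h⟩
  · subst h1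
    right
    rw [psw c a] at h
    exact ⟨rfl, by simpa using (Multiset.cons_inj_right a).mp h⟩

lemma triple_eq_s3 {a b c d e f : ℤ} (h : ({a,b,c} : Multiset ℤ) = {d,e,f}) :
    (a = d ∧ ((b = e ∧ c = f) ∨ (b = f ∧ c = e))) ∨
    (a = e ∧ ((b = d ∧ c = f) ∨ (b = f ∧ c = d))) ∨
    (a = f ∧ ((b = d ∧ c = e) ∨ (b = e ∧ c = d))) := by
  have ha : a ∈ ({d,e,f}:Multiset ℤ) := h ▸ Multiset.mem_cons_self a {b,c}
  rcases (by simpa using ha : a = d ∨ a = e ∨ a = f) with h1 | h1 | h1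
  · subst h1
    exact Or.inl ⟨rfl, pair_eq ((Multiset.cons_inj_right a).mp h)⟩
  · subst h1
    rw [sw12 d a f] at h
    exact Or.inr (Or.inl ⟨rfl, pair_eq ((Multiset.cons_inj_right a).mp h)⟩)
  · subst h1
    rw [sw23 d e a, sw12 d a e] at h
    exact Or.inr (Or.inr ⟨rfl, pair_eq ((Multiset.cons_inj_right a).mp h)⟩)

lemma sort3 (s : Multiset ℤ) (h : Multiset.card s = 3) :
    ∃ a b c : ℤ, s = {a,b,c} ∧ b.natAbs ≤ a.natAbs ∧ c.natAbs ≤ b.natAbs := by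
  obtain ⟨x, y, z, rfl⟩ := Multiset.card_eq_three.mp h
  rcases le_total x.natAbs y.natAbs with h1 | h1 <;>
    rcases le_total y.natAbs z.natAbs with h2 | h2 <;>
      rcases le_total x.natAbs z.natAbs with h3 | h3
  · exact ⟨z, y, x, by rw [sw23 x y z, sw12 x z y, sw23 z x y], h2, h1⟩
  · exact ⟨z, y, x, by rw [sw23 x y z, sw12 x z y, sw23 z x y], h2, h1⟩
  · exact ⟨y, z, x, by rw [sw12 x y z, sw23 y x z], h2, h3⟩
  · exact ⟨y, x, z, by rw [sw12 x y z], h1, h3⟩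
  · exact ⟨z, x, y, by rw [sw23 x y z, sw12 x z y], h3, h1⟩
  · exact ⟨x, z, y, by rw [sw23 x y z], h3, h2⟩
  · exact ⟨x, y, z, rfl, h1, h2⟩
  · exact ⟨x, y, z, rfl, h1, h2⟩



lemma trivial_triple_iff (a b c : ℤ) :
    TrivialTriple {a,b,c} ↔ (a + b = 0 ∨ a + c = 0 ∨ b + c = 0) := by
  constructor
  · rintro ⟨m, hle⟩
    obtain ⟨r, hr⟩ := Multiset.le_iff_exists_add.mp hle
    have hcard : Multiset.card r = 1 := by
      have := congrArg Multiset.card hr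
      simp at this
      omega
    obtain ⟨x, rfl⟩ := Multiset.card_eq_one.mp hcard
    have h3 : ({a,b,c} : Multiset ℤ) = {m, -m, x} := by rw [hr]; rfl
    rcases triple_eq_s3 h3 with ⟨h1, ⟨h4,h5⟩|⟨h4,h5⟩⟩ | ⟨h1, ⟨h4,h5⟩|⟨h4,h5⟩⟩ | ⟨h1, ⟨h4,h5⟩|⟨h4,h5⟩⟩ <;> omega
  · rintro (h | h | h)
    · refine ⟨a, Multiset.le_iff_exists_add.mpr ⟨{c}, ?_⟩⟩
      have hb : b = -a := by omega
      rw [hb]; rfl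
    · refine ⟨a, Multiset.le_iff_exists_add.mpr ⟨{b}, ?_⟩⟩
      have hc : c = -a := by omega
      rw [hc, sw23 a b (-a)]; rfl
    · refine ⟨b, Multiset.le_iff_exists_add.mpr ⟨{a}, ?_⟩⟩
      have hc : c = -b := by omega
      rw [hc, sw12 a b (-b), sw23 b a (-b)]; rfl

lemma tri {A : Set ℤ} (hsep : ∀ x ∈ A, ∀ y ∈ A, x.natAbs < y.natAbs → 3 * x.natAbs < y.natAbs)
    {x y : ℤ} (hx : x ∈ A) (hy : y ∈ A) :
    3 * x.natAbs < y.natAbs ∨ 3 * y.natAbs < x.natAbs ∨ x = y ∨ x = -y := by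
  rcases lt_trichotomy x.natAbs y.natAbs with h | h | h
  · exact Or.inl (hsep x hx y hy h)
  · exact Or.inr (Or.inr (Int.natAbs_eq_natAbs_iff.mp h))
  · exact Or.inr (Or.inl (hsep y hy x hx h))

section
variable {A : Set ℤ} (hsep : ∀ x ∈ A, ∀ y ∈ A, x.natAbs < y.natAbs → 3 * x.natAbs < y.natAbs)
include hsep

lemma pair2_core {b c e f : ℤ} (hb : b ∈ A) (hc : c ∈ A) (he : e ∈ A) (hf : f ∈ A)
    (o1 : c.natAbs ≤ b.natAbs) (o2 : f.natAbs ≤ e.natAbs) (o3 : e.natAbs ≤ b.natAbs)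
    (hsum : b + c = e + f) (hnz : b + c ≠ 0)
    (hne : ({b,c} : Multiset ℤ) ≠ {e,f}) : False := by
  by_cases hb0 : b = 0
  · subst hb0
    have hc0 : c = 0 := by omega
    have he0 : e = 0 := by omega
    have hf0 : f = 0 := by omega
    exact hne (by rw [hc0, he0, hf0])
  have hcb : c = b ∨ 3 * c.natAbs < b.natAbs := by
    rcases tri hsep hc hb with h | h | h | h
    · exact Or.inr h
    · exact Or.inr (by omega)
    · exact Or.inl h
    · exact absurd (show b + c = 0 by omega) hnz
  rcases tri hsep he hb with h | h | h | h
  · -- 3|e| < |b|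
    rcases hcb with h1 | h1 <;> omega
  · omega
  · -- e = b
    subst h
    have : f = c := by omega
    exact hne (by rw [this])
  · -- e = -b
    rcases tri hsep hf hb with h2 | h2 | h2 | h2
    · rcases hcb with h1 | h1 <;> omega
    · rcases hcb with h1 | h1 <;> omega
    · -- f = b
      exact hnz (by omega)
    · -- f = -b
      rcases hcb with h1 | h1 <;> omega

lemma pair2 {b c e f : ℤ} (hb : b ∈ A) (hc : c ∈ A) (he : e ∈ A) (hf : f ∈ A)
    (hsum : b + c = e + f) (hnz : b + c ≠ 0)
    (hne : ({b,c} : Multiset ℤ) ≠ {e,f}) : False := by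
  have hne2 : ({c,b} : Multiset ℤ) ≠ {e,f} := by rw [psw c b]; exact hne
  have hne3 : ({e,f} : Multiset ℤ) ≠ {b,c} := fun h => hne h.symm
  have hne4 : ({f,e} : Multiset ℤ) ≠ {b,c} := by rw [psw f e]; exact hne3
  have hne5 : ({b,c} : Multiset ℤ) ≠ {f,e} := by rw [psw f e]; exact hne
  have hne6 : ({c,b} : Multiset ℤ) ≠ {f,e} := by rw [psw c b, psw f e]; exact hne
  have hne7 : ({e,f} : Multiset ℤ) ≠ {c,b} := by rw [psw c b]; exact hne3
  have hne8 : ({f,e} : Multiset ℤ) ≠ {c,b} := by rw [psw f e, psw c b]; exact hne3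
  rcases le_total c.natAbs b.natAbs with h1 | h1 <;>
    rcases le_total f.natAbs e.natAbs with h2 | h2
  · rcases le_total e.natAbs b.natAbs with h3 | h3
    · exact pair2_core hsep hb hc he hf (by omega) (by omega) (by omega) (by omega) (by omega) hne
    · exact pair2_core hsep he hf hb hc (by omega) (by omega) (by omega) (by omega) (by omega) hne3
  · rcases le_total f.natAbs b.natAbs with h3 | h3
    · exact pair2_core hsep hb hc hf he (by omega) (by omega) (by omega) (by omega) (by omega) hne5
    · exact pair2_core hsep hf he hb hc (by omega) (by omega) (by omega) (by omega) (by omega) hne4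
  · rcases le_total e.natAbs c.natAbs with h3 | h3
    · exact pair2_core hsep hc hb he hf (by omega) (by omega) (by omega) (by omega) (by omega) hne2
    · exact pair2_core hsep he hf hc hb (by omega) (by omega) (by omega) (by omega) (by omega) hne7
  · rcases le_total f.natAbs c.natAbs with h3 | h3
    · exact pair2_core hsep hc hb hf he (by omega) (by omega) (by omega) (by omega) (by omega) hne6
    · exact pair2_core hsep hf he hc hb (by omega) (by omega) (by omega) (by omega) (by omega) hne8
end

section
variable {A : Set ℤ} (hsep : ∀ x ∈ A, ∀ y ∈ A, x.natAbs < y.natAbs → 3 * x.natAbs < y.natAbs)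

include hsep in
lemma disjoint_reps {s t : Multiset ℤ}
    (hs3 : Multiset.card s = 3) (ht3 : Multiset.card t = 3)
    (hsA : ∀ x ∈ s, x ∈ A) (htA : ∀ x ∈ t, x ∈ A)
    (hsum : s.sum = t.sum) (hnts : ¬ TrivialTriple s) (hntt : ¬ TrivialTriple t)
    (hne : s ≠ t) {x : ℤ} (hxs : x ∈ s) (hxt : x ∈ t) : False := by
  obtain ⟨s', rfl⟩ := Multiset.exists_cons_of_mem hxs
  obtain ⟨t', rfl⟩ := Multiset.exists_cons_of_mem hxt
  obtain ⟨b, c, rfl⟩ := Multiset.card_eq_two.mp (by simpa using hs3)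
  obtain ⟨e, f, rfl⟩ := Multiset.card_eq_two.mp (by simpa using ht3)
  have hsum2 : b + c = e + f := by
    have : x + (b + c) = x + (e + f) := by simpa using hsum
    omega
  have hnts' : ¬ TrivialTriple ({x, b, c} : Multiset ℤ) := hnts
  have hntt' : ¬ TrivialTriple ({x, e, f} : Multiset ℤ) := hntt
  rw [trivial_triple_iff] at hnts' hntt'
  push_neg at hnts' hntt'
  have hne' : ({b,c} : Multiset ℤ) ≠ {e,f} := by
    intro h
    exact hne (congrArg (x ::ₘ ·) h)
  exact pair2 hsep (hsA b (by simp)) (hsA c (by simp)) (htA e (by simp)) (htA f (by simp))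
    hsum2 hnts'.2.2 hne'
end

def Shapes (s t : Multiset ℤ) : Prop :=
  ∃ P Q x w : ℤ, 3 * Q.natAbs < P.natAbs ∧ x.natAbs ≤ Q.natAbs ∧ w.natAbs ≤ Q.natAbs ∧
    ((s = {P, x, w} ∧ t = {Q, Q, Q}) ∨ (s = {P, -Q, x} ∧ t = {Q, Q, w}) ∨
     (s = {P, -Q, -Q} ∧ t = {Q, x, w}))

private lemma blastB {a b c d e f : ℤ}
    (o2 : c.natAbs ≤ b.natAbs)
    (o3 : e.natAbs ≤ d.natAbs) (o4 : f.natAbs ≤ e.natAbs)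
    (hsum : a + b + c = d + e + f) (ha0 : a ≠ 0) (hb : b = a)
    (hc : c = a ∨ 3 * c.natAbs < a.natAbs)
    (hd : d = -a ∨ 3 * d.natAbs < a.natAbs)
    (he : e = -a ∨ 3 * e.natAbs < a.natAbs)
    (hf : f = -a ∨ 3 * f.natAbs < a.natAbs) : False := by
  rcases hc with h|h <;> rcases hd with h1|h1 <;>
    rcases he with h2|h2 <;> rcases hf with h3|h3 <;> omega

private lemma blastD {a b c d e f : ℤ}
    (o2 : c.natAbs ≤ b.natAbs)
    (o3 : e.natAbs ≤ d.natAbs) (o4 : f.natAbs ≤ e.natAbs)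
    (hsum : a + b + c = d + e + f) (ha0 : a ≠ 0)
    (hb : 3 * b.natAbs < a.natAbs) (hd : d = -a)
    (hc : c = a ∨ 3 * c.natAbs < a.natAbs)
    (he : e = -a ∨ 3 * e.natAbs < a.natAbs)
    (hf : f = -a ∨ 3 * f.natAbs < a.natAbs) : False := by
  rcases hc with h|h <;>
    rcases he with h2|h2 <;> rcases hf with h3|h3 <;> omega

section
variable {A : Set ℤ} (hsep : ∀ x ∈ A, ∀ y ∈ A, x.natAbs < y.natAbs → 3 * x.natAbs < y.natAbs)
include hsep

lemma main_core {a b c d e f : ℤ}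
    (haA : a ∈ A) (hbA : b ∈ A) (hcA : c ∈ A) (hdA : d ∈ A) (heA : e ∈ A) (hfA : f ∈ A)
    (o1 : b.natAbs ≤ a.natAbs) (o2 : c.natAbs ≤ b.natAbs)
    (o3 : e.natAbs ≤ d.natAbs) (o4 : f.natAbs ≤ e.natAbs) (o5 : d.natAbs ≤ a.natAbs)
    (hsum : a + b + c = d + e + f)
    (n1 : a + b ≠ 0) (n2 : a + c ≠ 0) (n3 : b + c ≠ 0)
    (n4 : d + e ≠ 0) (n5 : d + f ≠ 0) (n6 : e + f ≠ 0)
    (hne : ({a,b,c} : Multiset ℤ) ≠ {d,e,f})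
    (hdisj : ∀ x, x ∈ ({a,b,c} : Multiset ℤ) → x ∈ ({d,e,f} : Multiset ℤ) → False) :
    Shapes {a,b,c} {d,e,f} := by
  have ha0 : a ≠ 0 := by
    rintro rfl
    have hb0 : b = 0 := by omega
    have hc0 : c = 0 := by omega
    have hd0 : d = 0 := by omega
    have he0 : e = 0 := by omega
    have hf0 : f = 0 := by omega
    exact hne (by rw [hb0, hc0, hd0, he0, hf0])
  have hb' : b = a ∨ 3 * b.natAbs < a.natAbs := by
    rcases tri hsep hbA haA with h | h | h | h
    · exact Or.inr h
    · exact absurd h (by omega)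
    · exact Or.inl h
    · exact absurd (show a + b = 0 by omega) n1
  have hc' : c = a ∨ 3 * c.natAbs < a.natAbs := by
    rcases tri hsep hcA haA with h | h | h | h
    · exact Or.inr h
    · exact absurd h (by omega)
    · exact Or.inl h
    · exact absurd (show a + c = 0 by omega) n2
  have hd' : d = -a ∨ 3 * d.natAbs < a.natAbs := by
    rcases tri hsep hdA haA with h | h | h | h
    · exact Or.inr h
    · exact absurd h (by omega)
    · exact (hdisj a (by simp) (by rw [h]; simp)).elim
    · exact Or.inl h
  have he' : e = -a ∨ 3 * e.natAbs < a.natAbs := by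
    rcases tri hsep heA haA with h | h | h | h
    · exact Or.inr h
    · exact absurd h (by omega)
    · exact (hdisj a (by simp) (by rw [h]; simp)).elim
    · exact Or.inl h
  have hf' : f = -a ∨ 3 * f.natAbs < a.natAbs := by
    rcases tri hsep hfA haA with h | h | h | h
    · exact Or.inr h
    · exact absurd h (by omega)
    · exact (hdisj a (by simp) (by rw [h]; simp)).elim
    · exact Or.inl h
  rcases hb' with hb3 | hb3
  · exact (blastB o2 o3 o4 hsum ha0 hb3 hc' hd' he' hf').elim
  rcases hd' with hd3 | hd3
  · exact (blastD o2 o3 o4 hsum ha0 hb3 hd3 hc' he' hf').elim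
  -- main line: 3|b| < |a|, 3|d| < |a|
  rcases tri hsep hbA hdA with hbd | hbd | hbd | hbd
  · -- 3|b| < |d| : shape C1, show e = d and f = d
    have hed : e = d := by
      rcases tri hsep heA hdA with h | h | h | h
      · omega
      · omega
      · exact h
      · exact absurd (show d + e = 0 by omega) n4
    have hfd : f = d := by
      rcases tri hsep hfA hdA with h | h | h | h
      · omega
      · omega
      · exact h
      · exact absurd (show d + f = 0 by omega) n5
    exact ⟨a, d, b, c, hd3, by omega, by omega, Or.inl ⟨rfl, by rw [hed, hfd]⟩⟩
  · -- 3|d| < |b| : impossible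
    exact absurd hbd (by intro hq; omega)
  · -- b = d : common element
    exact (hdisj b (by simp) (by rw [hbd]; simp)).elim
  · -- b = -d
    rcases tri hsep hcA hbA with hcb | hcb | hcb | hcb
    · -- 3|c| < |b|
      rcases tri hsep heA hdA with hed | hed | hed | hed
      · -- 3|e| < |d|
        rcases tri hsep hfA hdA with hfd | hfd | hfd | hfd
        · -- all small : k = 2 contradiction
          exact absurd hfd (by intro hq; omega)
        · exact absurd hfd (by intro hq; omega)
        · -- f = d : shape C2 with t = {d,e,d}
          refine ⟨a, d, c, e, hd3, by omega, by omega, Or.inr (Or.inl ⟨by rw [hbd], ?_⟩)⟩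
          rw [hfd]
          exact sw23 d e d
        · exact absurd (show d + f = 0 by omega) n5
      · exact absurd hed (by intro hq; omega)
      · -- e = d : shape C2
        exact ⟨a, d, c, f, hd3, by omega, by omega,
          Or.inr (Or.inl ⟨by rw [hbd], by rw [hed]⟩)⟩
      · exact absurd (show d + e = 0 by omega) n4
    · -- 3|b| < |c| : impossible
      exact absurd hcb (by intro hq; omega)
    · -- c = b : shape C3
      exact ⟨a, d, e, f, hd3, o3, by omega,
        Or.inr (Or.inr ⟨by rw [hcb, hbd], rfl⟩)⟩
    · exact absurd (show b + c = 0 by omega) n3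
end

section
variable {A : Set ℤ} (hsep : ∀ x ∈ A, ∀ y ∈ A, x.natAbs < y.natAbs → 3 * x.natAbs < y.natAbs)

lemma shapes_heavy {s t : Multiset ℤ} (h : Shapes s t) :
    ∃ P Q α β : ℤ, 3 * Q.natAbs < P.natAbs ∧ α.natAbs ≤ Q.natAbs ∧ β.natAbs ≤ Q.natAbs ∧
      s = {P, α, β} ∧ (∀ z ∈ t, z.natAbs ≤ Q.natAbs) := by
  obtain ⟨P, Q, x, w, h1, h2, h3, hc⟩ := h
  rcases hc with ⟨hs, ht⟩ | ⟨hs, ht⟩ | ⟨hs, ht⟩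
  · refine ⟨P, Q, x, w, h1, h2, h3, hs, ?_⟩
    rw [ht]
    intro z hz
    rcases (by simpa using hz : z = Q ∨ z = Q ∨ z = Q) with rfl|rfl|rfl <;> omega
  · refine ⟨P, Q, -Q, x, h1, by simp, h2, hs, ?_⟩
    rw [ht]
    intro z hz
    rcases (by simpa using hz : z = Q ∨ z = Q ∨ z = w) with rfl|rfl|rfl <;> omega
  · refine ⟨P, Q, -Q, -Q, h1, by simp, by simp, hs, ?_⟩
    rw [ht]
    intro z hz
    rcases (by simpa using hz : z = Q ∨ z = x ∨ z = w) with rfl|rfl|rfl <;> omega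

lemma caseA {s t u : Multiset ℤ} {P Q w' y z : ℤ}
    (hQ0 : Q ≠ 0)
    (ht : t = {Q, Q, w'}) (hw' : w'.natAbs ≤ Q.natAbs)
    (hsyz : s = {P, y, z}) (hy : y.natAbs ≤ Q.natAbs) (hz : z.natAbs ≤ Q.natAbs)
    (hPQ : 3 * Q.natAbs < P.natAbs)
    (hsu : Shapes s u) (htu : Shapes t u ∨ Shapes u t) : False := by
  rcases htu with htu | hut
  · -- t heavy over u : impossible since t has two elements of maximal absolute value
    obtain ⟨P₃, Q₃, α, β, hb1, hα, hβ, h1, _⟩ := shapes_heavy htu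
    rw [ht] at h1
    clear hy hz hPQ hsu ht hsyz
    rcases triple_eq_s3 h1 with ⟨e1, ⟨e2,e3⟩|⟨e2,e3⟩⟩ | ⟨e1, ⟨e2,e3⟩|⟨e2,e3⟩⟩ |
      ⟨e1, ⟨e2,e3⟩|⟨e2,e3⟩⟩ <;> omega
  · -- u heavy over t
    obtain ⟨P₃, Q₃, α, β, hb1, hα, hβ, hu1, htb⟩ := shapes_heavy hut
    have hQQ₃ : Q.natAbs ≤ Q₃.natAbs := htb Q (by rw [ht]; simp)
    obtain ⟨P₂, Q₂, x₂, w₂, hc1, hc2, hc3, hcc2⟩ := hsu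
    rcases hcc2 with ⟨hs2, hu2⟩ | ⟨hs2, hu2⟩ | ⟨hs2, hu2⟩
    · clear hy hz hPQ hw' hQQ₃ hc1 hc2 hc3 hs2 ht hsyz
      rcases triple_eq_s3 (hu2.symm.trans hu1) with ⟨e1, ⟨e2,e3⟩|⟨e2,e3⟩⟩ |
        ⟨e1, ⟨e2,e3⟩|⟨e2,e3⟩⟩ | ⟨e1, ⟨e2,e3⟩|⟨e2,e3⟩⟩ <;> omega
    · clear hy hz hPQ hw' hQQ₃ hc1 hc2 hs2 ht hsyz
      rcases triple_eq_s3 (hu2.symm.trans hu1) with ⟨e1, ⟨e2,e3⟩|⟨e2,e3⟩⟩ |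
        ⟨e1, ⟨e2,e3⟩|⟨e2,e3⟩⟩ | ⟨e1, ⟨e2,e3⟩|⟨e2,e3⟩⟩ <;> omega
    · -- C3 : s = {P₂,-Q₂,-Q₂}, u = {Q₂,x₂,w₂}
      have hQ₂Q : Q₂.natAbs ≤ Q.natAbs := by
        clear hb1 hα hβ hw' hQQ₃ hc2 hc3 ht hu1 hu2
        rcases triple_eq_s3 (hsyz.symm.trans hs2) with ⟨e1, ⟨e2,e3⟩|⟨e2,e3⟩⟩ |
          ⟨e1, ⟨e2,e3⟩|⟨e2,e3⟩⟩ | ⟨e1, ⟨e2,e3⟩|⟨e2,e3⟩⟩ <;> omega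
      rcases triple_eq_s3 (hu2.symm.trans hu1) with ⟨e1, ⟨e2,e3⟩|⟨e2,e3⟩⟩ |
        ⟨e1, ⟨e2,e3⟩|⟨e2,e3⟩⟩ | ⟨e1, ⟨e2,e3⟩|⟨e2,e3⟩⟩ <;> omega

include hsep in
lemma core3 {s t u : Multiset ℤ}
    (ht3 : Multiset.card t = 3) (hu3 : Multiset.card u = 3)
    (htA : ∀ x ∈ t, x ∈ A) (huA : ∀ x ∈ u, x ∈ A)
    (htsum : t.sum = u.sum)
    (hntt : ¬ TrivialTriple t) (hntu : ¬ TrivialTriple u) (htu_ne : t ≠ u)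
    (hst : Shapes s t) (hsu : Shapes s u) (htu : Shapes t u ∨ Shapes u t) : False := by
  obtain ⟨P, Q, x, w, h1, h2, h3, hcc⟩ := hst
  have hQt0 : ∀ (q ww : ℤ), t = {q, q, ww} → q ≠ 0 := by
    intro q ww hteq hq0
    rw [hteq, trivial_triple_iff] at hntt
    push_neg at hntt
    exact hntt.1 (by omega)
  have hQu0 : ∀ (q ww : ℤ), u = {q, q, ww} → q ≠ 0 := by
    intro q ww hueq hq0
    rw [hueq, trivial_triple_iff] at hntu
    push_neg at hntu
    exact hntu.1 (by omega)
  rcases hcc with ⟨hs1, ht1⟩ | ⟨hs1, ht1⟩ | ⟨hs1, ht1⟩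
  · exact caseA (hQt0 Q Q ht1) ht1 le_rfl hs1 h2 h3 h1 hsu htu
  · exact caseA (hQt0 Q w ht1) ht1 h3 hs1 (by simp) h2 h1 hsu htu
  · -- (s,t) C3 : s = {P,-Q,-Q}, t = {Q,x,w}
    obtain ⟨P₂, Q₂, x₂, w₂, g1, g2, g3, gcc⟩ := hsu
    rcases gcc with ⟨gs1, gu1⟩ | ⟨gs1, gu1⟩ | ⟨gs1, gu1⟩
    · exact caseA (hQu0 Q₂ Q₂ gu1) gu1 le_rfl gs1 g2 g3 g1
        ⟨P, Q, x, w, h1, h2, h3, Or.inr (Or.inr ⟨hs1, ht1⟩)⟩ htu.symm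
    · exact caseA (hQu0 Q₂ w₂ gu1) gu1 g3 gs1 (by simp) g2 g1
        ⟨P, Q, x, w, h1, h2, h3, Or.inr (Or.inr ⟨hs1, ht1⟩)⟩ htu.symm
    · -- both C3 : Q = Q₂, common element
      have hQeq : Q = Q₂ := by
        clear h2 h3 g2 g3 hQt0 hQu0 ht1 gu1
        rcases triple_eq_s3 (hs1.symm.trans gs1) with ⟨e1, ⟨e2,e3⟩|⟨e2,e3⟩⟩ |
          ⟨e1, ⟨e2,e3⟩|⟨e2,e3⟩⟩ | ⟨e1, ⟨e2,e3⟩|⟨e2,e3⟩⟩ <;> omega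
      exact disjoint_reps hsep ht3 hu3 htA huA htsum hntt hntu htu_ne
        (x := Q) (by rw [ht1]; simp) (by rw [gu1, hQeq]; simp)
end

section
variable {A : Set ℤ} (hsep : ∀ x ∈ A, ∀ y ∈ A, x.natAbs < y.natAbs → 3 * x.natAbs < y.natAbs)

include hsep in
lemma main_pair {s t : Multiset ℤ}
    (hs3 : Multiset.card s = 3) (ht3 : Multiset.card t = 3)
    (hsA : ∀ x ∈ s, x ∈ A) (htA : ∀ x ∈ t, x ∈ A)
    (hsum : s.sum = t.sum) (hnts : ¬ TrivialTriple s) (hntt : ¬ TrivialTriple t)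
    (hne : s ≠ t) : Shapes s t ∨ Shapes t s := by
  obtain ⟨a, b, c, rfl, o1, o2⟩ := sort3 s hs3
  obtain ⟨d, e, f, rfl, o3, o4⟩ := sort3 t ht3
  have hdisj : ∀ x, x ∈ ({a,b,c} : Multiset ℤ) → x ∈ ({d,e,f} : Multiset ℤ) → False :=
    fun x hx hy => disjoint_reps hsep hs3 ht3 hsA htA hsum hnts hntt hne hx hy
  have hsum' : a + b + c = d + e + f := by
    have h1 : a + (b + (c + 0)) = d + (e + (f + 0)) := by simpa using hsum
    omega
  rw [trivial_triple_iff] at hnts hntt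
  push_neg at hnts hntt
  obtain ⟨m1, m2, m3⟩ := hnts
  obtain ⟨m4, m5, m6⟩ := hntt
  rcases le_total d.natAbs a.natAbs with h | h
  · exact Or.inl (main_core hsep (hsA a (by simp)) (hsA b (by simp)) (hsA c (by simp))
      (htA d (by simp)) (htA e (by simp)) (htA f (by simp)) o1 o2 o3 o4 h hsum'
      m1 m2 m3 m4 m5 m6 hne hdisj)
  · exact Or.inr (main_core hsep (htA d (by simp)) (htA e (by simp)) (htA f (by simp))
      (hsA a (by simp)) (hsA b (by simp)) (hsA c (by simp)) o3 o4 o1 o2 h (by omega)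
      m4 m5 m6 m1 m2 m3 (Ne.symm hne) (fun x hx hy => hdisj x hy hx))

lemma shapes_lt {s t : Multiset ℤ} (h : Shapes s t) :
    (Multiset.map Int.natAbs t).sup < (Multiset.map Int.natAbs s).sup := by
  obtain ⟨P, Q, α, β, h1, hα, hβ, hs, htb⟩ := shapes_heavy h
  have hP : P.natAbs ≤ (Multiset.map Int.natAbs s).sup :=
    Multiset.le_sup (by rw [hs]; simp)
  have ht' : (Multiset.map Int.natAbs t).sup ≤ Q.natAbs := by
    apply Multiset.sup_le.mpr
    intro x hx
    obtain ⟨z, hz, rfl⟩ := Multiset.mem_map.mp hx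
    exact htb z hz
  omega

include hsep in
lemma no3 {s t u : Multiset ℤ}
    (hs3 : Multiset.card s = 3) (ht3 : Multiset.card t = 3) (hu3 : Multiset.card u = 3)
    (hsA : ∀ x ∈ s, x ∈ A) (htA : ∀ x ∈ t, x ∈ A) (huA : ∀ x ∈ u, x ∈ A)
    (hst : s.sum = t.sum) (hsu : s.sum = u.sum)
    (hnts : ¬ TrivialTriple s) (hntt : ¬ TrivialTriple t) (hntu : ¬ TrivialTriple u)
    (nst : s ≠ t) (nsu : s ≠ u) (ntu : t ≠ u) : False := by
  have p1 := main_pair hsep hs3 ht3 hsA htA hst hnts hntt nst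
  have p2 := main_pair hsep hs3 hu3 hsA huA hsu hnts hntu nsu
  have p3 := main_pair hsep ht3 hu3 htA huA (by rw [← hst, hsu]) hntt hntu ntu
  have htu_sum : t.sum = u.sum := by rw [← hst, hsu]
  rcases p1 with h1 | h1 <;> rcases p2 with h2 | h2
  · exact core3 hsep ht3 hu3 htA huA htu_sum hntt hntu ntu h1 h2 p3
  · rcases p3 with h3 | h3
    · exact absurd (shapes_lt h1) (by have q2 := shapes_lt h2; have q3 := shapes_lt h3; omega)
    · exact core3 hsep hs3 ht3 hsA htA hst hnts hntt nst h2 h3 (Or.inl h1)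
  · rcases p3 with h3 | h3
    · exact core3 hsep hs3 hu3 hsA huA hsu hnts hntu nsu h1 h3 (Or.inl h2)
    · exact absurd (shapes_lt h1) (by have q2 := shapes_lt h2; have q3 := shapes_lt h3; omega)
  · rcases p3 with h3 | h3
    · exact core3 hsep hu3 hs3 huA hsA hsu.symm hntu hnts (Ne.symm nsu) h3 h1 (Or.inl h2)
    · exact core3 hsep ht3 hs3 htA hsA hst.symm hntt hnts (Ne.symm nst) h3 h2 (Or.inl h1)
end

lemma shape_witness {s t : Multiset ℤ} (hsh : Shapes s t) :
    (∃ x, 1 < Multiset.count x s) ∨ (∃ x, 1 < Multiset.count x t) := by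
  obtain ⟨P, Q, x, w, b1, b2, b3, hc⟩ := hsh
  rcases hc with ⟨e1, e2⟩ | ⟨e1, e2⟩ | ⟨e1, e2⟩
  · refine Or.inr ⟨Q, ?_⟩
    rw [e2]
    simp [Multiset.count_cons]
  · refine Or.inr ⟨Q, ?_⟩
    rw [e2]
    have : Multiset.count Q ({Q, Q, w} : Multiset ℤ) = 2 + Multiset.count Q {w} := by
      simp [Multiset.count_cons]
      omega
    omega
  · refine Or.inl ⟨-Q, ?_⟩
    rw [e1]
    have : Multiset.count (-Q) ({P, -Q, -Q} : Multiset ℤ)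
        = Multiset.count (-Q) {P} + 2 := by
      simp [Multiset.count_cons, Multiset.count_singleton]
      omega
    omega

theorem stmt_3 (lam : ℕ → ℕ) (h0 : lam 0 = 0) (h1 : 0 < lam 1)
    (hlac : ∀ n, 1 ≤ n → 3 * lam n < lam (n + 1))
    (D : ℤ) (hD : IsP3Exception (lacSet lam) D) :
    (∃ s t : Multiset ℤ, s ≠ t ∧
      {u : Multiset ℤ | IsRep (lacSet lam) D u ∧ ¬ TrivialTriple u} = {s, t}) ∧
    (∃ u : Multiset ℤ, IsRep (lacSet lam) D u ∧ ¬ TrivialTriple u ∧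
      ∃ x : ℤ, 1 < u.count x) := by
  classical
  have hmono : StrictMono lam := strictMono_nat_of_lt_succ (by
    intro n
    rcases Nat.eq_zero_or_pos n with rfl | hn
    · simpa [h0] using h1
    · have := hlac n hn; omega)
  have hsep : ∀ x ∈ lacSet lam, ∀ y ∈ lacSet lam,
      x.natAbs < y.natAbs → 3 * x.natAbs < y.natAbs := by
    rintro x ⟨m, hm⟩ y ⟨n, hn⟩ hlt
    have hxm : x.natAbs = lam m := by rcases hm with rfl | rfl <;> simp
    have hyn : y.natAbs = lam n := by rcases hn with rfl | rfl <;> simp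
    rw [hxm, hyn] at hlt ⊢
    have hmn : m < n := hmono.lt_iff_lt.mp hlt
    have hstep : 3 * lam m < lam (m + 1) := by
      rcases Nat.eq_zero_or_pos m with rfl | hm1
      · simpa [h0] using h1
      · exact hlac m hm1
    have hle : lam (m + 1) ≤ lam n := hmono.monotone hmn
    omega
  obtain ⟨s, t, hs, ht, hnts, hntt, hne⟩ := hD
  constructor
  · refine ⟨s, t, hne, ?_⟩
    ext u
    simp only [Set.mem_setOf_eq, Set.mem_insert_iff, Set.mem_singleton_iff]
    constructor
    · rintro ⟨hu, hntu⟩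
      by_contra hcon
      push_neg at hcon
      exact no3 hsep hs.1 ht.1 hu.1 hs.2.1 ht.2.1 hu.2.1
        (hs.2.2.trans ht.2.2.symm) (hs.2.2.trans hu.2.2.symm)
        hnts hntt hntu hne (Ne.symm hcon.1) (Ne.symm hcon.2)
    · rintro (rfl | rfl)
      exacts [⟨hs, hnts⟩, ⟨ht, hntt⟩]
  · rcases main_pair hsep hs.1 ht.1 hs.2.1 ht.2.1 (hs.2.2.trans ht.2.2.symm) hnts hntt hne
      with hsh | hsh
    · rcases shape_witness hsh with ⟨x, hx⟩ | ⟨x, hx⟩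
      exacts [⟨s, hs, hnts, x, hx⟩, ⟨t, ht, hntt, x, hx⟩]
    · rcases shape_witness hsh with ⟨x, hx⟩ | ⟨x, hx⟩
      exacts [⟨t, ht, hntt, x, hx⟩, ⟨s, hs, hnts, x, hx⟩]
end

section
/- Let A₅ = {±5ⁿ : n ≥ 0} ∪ {0}. Then the set of points D ∈ A₅ + A₅ + A₅ that fail the P(3) property is exactly {±3·5ⁿ : n ≥ 0}, and each such exception D = 3·5ⁿ has exactly the two representations 5ⁿ⁺¹ − 5ⁿ − 5ⁿ and 5ⁿ + 5ⁿ + 5ⁿ (modulo permutation and sign). -/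
/-- `A₅ = {±5ⁿ : n ≥ 0} ∪ {0}`. -/
def A5 : Set ℤ := {x : ℤ | ∃ n : ℕ, x = 5 ^ n ∨ x = -(5 ^ n)} ∪ {0}





lemma p5pos (n : ℕ) : (0:ℤ) < 5 ^ n := by positivity
lemma p5inj {a b : ℕ} (h : (5:ℤ)^a = 5^b) : a = b := by
  have h' : (5:ℕ)^a = 5^b := by exact_mod_cast h
  exact Nat.pow_right_injective (by norm_num) h'

lemma p5nn (a b : ℕ) : (5:ℤ)^a ≠ -(5^b) := by
  have := p5pos a; have := p5pos b; intro h; omega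

lemma p5n0 (a : ℕ) : (5:ℤ)^a ≠ 0 := (p5pos a).ne'

-- balanced uniqueness
lemma balanced (N : ℕ) : ∀ (h : ℕ → ℤ), (∀ i, |h i| ≤ 4) →
    (Finset.range N).sum (fun i => h i * 5^i) = 0 → ∀ i < N, h i = 0 := by
  induction N with
  | zero => intro h _ _ i hi; omega
  | succ N ih =>
    intro h hb hsum i hi
    rw [Finset.sum_range_succ'] at hsum
    simp only [pow_zero, mul_one] at hsum
    have e1 : (Finset.range N).sum (fun i => (5:ℤ) * (h (i+1) * 5^i))
        = (Finset.range N).sum (fun k => h (k+1) * 5^(k+1)) :=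
      Finset.sum_congr rfl (fun i _ => by ring)
    have key : h 0 + 5 * (Finset.range N).sum (fun i => h (i+1) * 5^i) = 0 := by
      rw [Finset.mul_sum, e1]; linarith
    have h5 : (5:ℤ) ∣ h 0 := ⟨-(Finset.range N).sum (fun i => h (i+1) * 5^i), by linarith⟩
    have h00 : h 0 = 0 := by
      rcases h5 with ⟨c, hc⟩
      have hb0 := hb 0
      rw [hc, abs_mul] at hb0
      have h5' : |(5:ℤ)| = 5 := by norm_num
      rw [h5'] at hb0
      have hc0 : |c| < 1 := by linarith [abs_nonneg c]
      have : c = 0 := Int.abs_lt_one_iff.mp hc0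
      simp [hc, this]
    have hrest : (Finset.range N).sum (fun i => h (i+1) * 5^i) = 0 := by
      rw [h00] at key; linarith
    rcases Nat.eq_zero_or_pos i with rfl | hip
    · exact h00
    · obtain ⟨j, rfl⟩ := Nat.exists_eq_succ_of_ne_zero (by omega : i ≠ 0)
      exact ih (fun k => h (k+1)) (fun k => hb (k+1)) hrest j (by omega)

def dig (s : Multiset ℤ) (e : ℕ) : ℤ := (s.count (5^e) : ℤ) - (s.count (-(5^e)) : ℤ)

lemma dig_zero (e : ℕ) : dig 0 e = 0 := by simp [dig]

lemma dig_cons (a : ℤ) (s : Multiset ℤ) (e : ℕ) :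
    dig (a ::ₘ s) e = dig s e + ((if a = 5^e then (1:ℤ) else 0) - (if a = -(5^e) then 1 else 0)) := by
  have hp := p5pos e
  rcases eq_or_ne a (5^e) with rfl | h1
  · rw [dig, dig, Multiset.count_cons, Multiset.count_cons, if_pos rfl,
      if_neg (show ¬ -((5:ℤ)^e) = 5^e by omega), if_pos rfl,
      if_neg (show ¬ (5:ℤ)^e = -(5^e) by omega)]
    push_cast; ring
  · rcases eq_or_ne a (-(5^e)) with rfl | h2
    · rw [dig, dig, Multiset.count_cons, Multiset.count_cons,
        if_neg (show ¬ (5:ℤ)^e = -(5^e) by omega), if_pos rfl,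
        if_neg (show ¬ -((5:ℤ)^e) = 5^e by omega), if_pos rfl]
      push_cast; ring
    · rw [dig, dig, Multiset.count_cons, Multiset.count_cons,
        if_neg (fun h => h1 h.symm), if_neg (fun h => h2 h.symm),
        if_neg h1, if_neg h2]
      push_cast; ring

lemma single_sum (a : ℤ) (ha : a ∈ A5) (N : ℕ)
    (hN : ∀ k : ℕ, (a = 5^k ∨ a = -(5^k)) → k < N) :
    (Finset.range N).sum (fun e => ((if a = 5^e then (1:ℤ) else 0) - (if a = -(5^e) then 1 else 0)) * 5^e) = a := by
  rcases ha with ⟨m, hm | hm⟩ | h0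
  · subst hm
    have : ∀ e ∈ Finset.range N, ((if (5:ℤ)^m = 5^e then (1:ℤ) else 0) - (if (5:ℤ)^m = -(5^e) then 1 else 0)) * 5^e
        = if e = m then (5:ℤ)^e else 0 := by
      intro e _
      have h2 : (5:ℤ)^m ≠ -(5^e) := by have := p5pos m; have := p5pos e; intro h; omega
      by_cases he : e = m
      · subst he; simp [h2]
      · have : (5:ℤ)^m ≠ 5^e := fun h => he (p5inj h).symm
        simp [this, h2, he]
    rw [Finset.sum_congr rfl this, Finset.sum_ite_eq' (Finset.range N) m (fun e => (5:ℤ)^e)]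
    simp [Finset.mem_range.mpr (hN m (Or.inl rfl))]
  · subst hm
    have : ∀ e ∈ Finset.range N, ((if -((5:ℤ)^m) = 5^e then (1:ℤ) else 0) - (if -((5:ℤ)^m) = -(5^e) then 1 else 0)) * 5^e
        = if e = m then -((5:ℤ)^e) else 0 := by
      intro e _
      have h2 : -((5:ℤ)^m) ≠ 5^e := by have := p5pos m; have := p5pos e; intro h; omega
      by_cases he : e = m
      · subst he; simp [h2]
      · have : -((5:ℤ)^m) ≠ -(5^e) := by
          intro h; exact he ((p5inj (neg_injective h)).symm)
        simp [this, h2, he]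
    rw [Finset.sum_congr rfl this, Finset.sum_ite_eq' (Finset.range N) m (fun e => -((5:ℤ)^e))]
    simp [Finset.mem_range.mpr (hN m (Or.inr rfl))]
  · simp only [Set.mem_singleton_iff] at h0
    subst h0
    have : ∀ e ∈ Finset.range N, ((if (0:ℤ) = 5^e then (1:ℤ) else 0) - (if (0:ℤ) = -(5^e) then 1 else 0)) * 5^e = 0 := by
      intro e _
      have h1 : (0:ℤ) ≠ 5^e := (p5pos e).ne
      have h2 : (0:ℤ) ≠ -(5^e) := by have := p5pos e; omega
      simp [h1, h2]
    rw [Finset.sum_congr rfl this]; simp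

lemma sum_dig (s : Multiset ℤ) (hs : ∀ x ∈ s, x ∈ A5) (N : ℕ)
    (hN : ∀ x ∈ s, ∀ k : ℕ, (x = 5^k ∨ x = -(5^k)) → k < N) :
    (Finset.range N).sum (fun e => dig s e * 5^e) = s.sum := by
  induction s using Multiset.induction with
  | empty => simp [dig_zero]
  | cons a s ih =>
    have ha : a ∈ A5 := hs a (Multiset.mem_cons_self a s)
    have key : (Finset.range N).sum (fun e => dig (a ::ₘ s) e * 5^e)
        = (Finset.range N).sum (fun e => dig s e * 5^e)
          + (Finset.range N).sum (fun e => ((if a = 5^e then (1:ℤ) else 0) - (if a = -(5^e) then 1 else 0)) * 5^e) := by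
      rw [← Finset.sum_add_distrib]
      exact Finset.sum_congr rfl (fun e _ => by rw [dig_cons]; ring)
    rw [key, ih (fun x hx => hs x (Multiset.mem_cons_of_mem hx))
          (fun x hx => hN x (Multiset.mem_cons_of_mem hx)),
        single_sum a ha N (hN a (Multiset.mem_cons_self a s)), Multiset.sum_cons, add_comm]





lemma exists_bound (s : Multiset ℤ) :
    ∃ N : ℕ, ∀ x ∈ s, ∀ k : ℕ, (x = 5^k ∨ x = -(5^k)) → k < N := by
  induction s using Multiset.induction with
  | empty => exact ⟨0, fun x hx => absurd hx (Multiset.notMem_zero x)⟩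
  | cons a s ih =>
    obtain ⟨N, hN⟩ := ih
    by_cases hex : ∃ k : ℕ, a = 5^k ∨ a = -(5^k)
    · obtain ⟨k0, hk0⟩ := hex
      refine ⟨max N (k0+1), fun x hx k hk => ?_⟩
      rcases Multiset.mem_cons.mp hx with rfl | hx'
      · have : k = k0 := by
          rcases hk0 with h0 | h0 <;> rcases hk with h | h
          · exact (p5inj (h ▸ h0 : (5:ℤ)^k = 5^k0)).symm ▸ rfl
          · exfalso; have := p5pos k; have := p5pos k0; omega
          · exfalso; have := p5pos k; have := p5pos k0; omega
          · exact p5inj (neg_injective (h ▸ h0 : -((5:ℤ)^k) = -(5^k0)))|>.symm ▸ rfl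
        omega
      · exact lt_of_lt_of_le (hN x hx' k hk) (le_max_left _ _)
    · refine ⟨N, fun x hx k hk => ?_⟩
      rcases Multiset.mem_cons.mp hx with rfl | hx'
      · exact absurd ⟨k, hk⟩ hex
      · exact hN x hx' k hk

lemma pair_le {s : Multiset ℤ} {m : ℤ} (h1 : m ∈ s) (h2 : -m ∈ s) (h3 : m ≠ -m) :
    ({m, -m} : Multiset ℤ) ≤ s := by
  rw [Multiset.le_iff_count]
  intro b
  have hcount : Multiset.count b ({m, -m} : Multiset ℤ)
      = (if b = m then 1 else 0) + (if b = -m then 1 else 0) := by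
    simp only [Multiset.insert_eq_cons, Multiset.count_cons, Multiset.count_singleton]
    ring
  rw [hcount]
  by_cases hb1 : b = m
  · subst hb1
    rw [if_pos rfl, if_neg h3]
    simpa using Multiset.one_le_count_iff_mem.mpr h1
  · rw [if_neg hb1]
    by_cases hb2 : b = -m
    · subst hb2
      rw [if_pos rfl]
      simpa using Multiset.one_le_count_iff_mem.mpr h2
    · rw [if_neg hb2]; exact Nat.zero_le _

lemma nt_count {s : Multiset ℤ} (hnt : ¬TrivialTriple s) (e : ℕ) :
    s.count (5^e) = 0 ∨ s.count (-(5^e)) = 0 := by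
  by_contra h
  push_neg at h
  refine hnt ⟨5^e, pair_le ?_ ?_ ?_⟩
  · exact Multiset.count_pos.mp (Nat.pos_of_ne_zero h.1)
  · exact Multiset.count_pos.mp (Nat.pos_of_ne_zero h.2)
  · have := p5pos e; omega

lemma count_pow_eq_max {s : Multiset ℤ} (hnt : ¬TrivialTriple s) (e : ℕ) :
    (s.count (5^e) : ℤ) = max (dig s e) 0 ∧ (s.count (-(5^e)) : ℤ) = max (-(dig s e)) 0 := by
  rcases nt_count hnt e with h | h <;>
    simp only [dig, h, Nat.cast_zero, zero_sub, sub_zero, neg_neg] <;>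
    constructor <;> simp [max_def] <;> omega

lemma triple_or_bound {D : ℤ} {s : Multiset ℤ} (hs : IsRep A5 D s) (hnt : ¬TrivialTriple s) :
    (∃ n : ℕ, s = ({(5:ℤ)^n, 5^n, 5^n} : Multiset ℤ) ∧ D = 3 * 5^n) ∨
    (∃ n : ℕ, s = ({-((5:ℤ)^n), -(5^n), -(5^n)} : Multiset ℤ) ∧ D = -(3 * 5^n)) ∨
    (∀ e, |dig s e| ≤ 2) := by
  by_cases hb : ∀ e, |dig s e| ≤ 2
  · exact Or.inr (Or.inr hb)
  push_neg at hb
  obtain ⟨e, he⟩ := hb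
  have hc1 : s.count (5^e) ≤ 3 := hs.1 ▸ Multiset.count_le_card _ _
  have hc2 : s.count (-(5^e)) ≤ 3 := hs.1 ▸ Multiset.count_le_card _ _
  have hrep : ∀ a : ℤ, s.count a = 3 → s = ({a, a, a} : Multiset ℤ) ∧ D = 3 * a := by
    intro a ha
    have hall : ∀ x ∈ s, a = x := Multiset.count_eq_card.mp (by rw [ha, hs.1])
    have hrepl : s = Multiset.replicate 3 a := by
      rw [show (3:ℕ) = Multiset.card s from hs.1.symm]
      exact Multiset.eq_replicate_card.mpr (fun b hb => (hall b hb).symm)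
    constructor
    · rw [hrepl]; rfl
    · rw [← hs.2.2, hrepl, Multiset.sum_replicate]; push_cast; ring
  rcases nt_count hnt e with h | h
  · have h3 : s.count (-(5^e)) = 3 := by
      simp only [dig, h, Nat.cast_zero, zero_sub, abs_neg] at he
      rw [abs_of_nonneg (by positivity)] at he
      omega
    right; left
    exact ⟨e, (hrep _ h3).1, by rw [(hrep _ h3).2]; ring⟩
  · have h3 : s.count (5^e) = 3 := by
      simp only [dig, h, Nat.cast_zero, sub_zero] at he
      rw [abs_of_nonneg (by positivity)] at he
      omega
    left
    exact ⟨e, (hrep _ h3).1, (hrep _ h3).2⟩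

lemma notA5_notMem {s : Multiset ℤ} (hs : ∀ x ∈ s, x ∈ A5) {b : ℤ} (hb0 : b ≠ 0)
    (hb : ∀ e : ℕ, b ≠ 5^e ∧ b ≠ -(5^e)) : b ∉ s := by
  intro hm
  rcases hs b hm with ⟨n, hn | hn⟩ | h0
  · exact (hb n).1 hn
  · exact (hb n).2 hn
  · exact hb0 h0

lemma rep_eq {D : ℤ} {s t : Multiset ℤ} (hs : IsRep A5 D s) (ht : IsRep A5 D t)
    (hnts : ¬TrivialTriple s) (hntt : ¬TrivialTriple t)
    (hbs : ∀ e, |dig s e| ≤ 2) (hbt : ∀ e, |dig t e| ≤ 2) : s = t := by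
  obtain ⟨Ns, hNs⟩ := exists_bound s
  obtain ⟨Nt, hNt⟩ := exists_bound t
  set N := max Ns Nt with hN
  have hsum_s : (Finset.range N).sum (fun e => dig s e * 5^e) = D := by
    rw [sum_dig s hs.2.1 N (fun x hx k hk => lt_of_lt_of_le (hNs x hx k hk) (le_max_left _ _))]
    exact hs.2.2
  have hsum_t : (Finset.range N).sum (fun e => dig t e * 5^e) = D := by
    rw [sum_dig t ht.2.1 N (fun x hx k hk => lt_of_lt_of_le (hNt x hx k hk) (le_max_right _ _))]
    exact ht.2.2
  have h0 : (Finset.range N).sum (fun e => (dig s e - dig t e) * 5^e) = 0 := by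
    have : ∀ e ∈ Finset.range N, (dig s e - dig t e) * 5^e = dig s e * 5^e - dig t e * 5^e :=
      fun e _ => by ring
    rw [Finset.sum_congr rfl this, Finset.sum_sub_distrib, hsum_s, hsum_t, sub_self]
  have hdig_lt : ∀ i < N, dig s i - dig t i = 0 := by
    refine balanced N _ (fun i => ?_) h0
    have h1 := hbs i; have h2 := hbt i
    have : |dig s i - dig t i| ≤ |dig s i| + |dig t i| := abs_sub _ _
    omega
  have hdig_ge : ∀ i : ℕ, N ≤ i → dig s i = 0 ∧ dig t i = 0 := by
    intro i hi
    have hps : (5:ℤ)^i ∉ s := fun hm => by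
      have := hNs _ hm i (Or.inl rfl); omega
    have hpns : -((5:ℤ)^i) ∉ s := fun hm => by
      have := hNs _ hm i (Or.inr rfl); omega
    have hpt : (5:ℤ)^i ∉ t := fun hm => by
      have := hNt _ hm i (Or.inl rfl); omega
    have hpnt : -((5:ℤ)^i) ∉ t := fun hm => by
      have := hNt _ hm i (Or.inr rfl); omega
    constructor <;>
      simp [dig, Multiset.count_eq_zero_of_notMem, hps, hpns, hpt, hpnt]
  have hdig : ∀ e : ℕ, dig s e = dig t e := by
    intro e
    rcases lt_or_ge e N with h | h
    · have := hdig_lt e h; omega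
    · have := hdig_ge e h; omega
  have hcne : ∀ b : ℤ, b ≠ 0 → s.count b = t.count b := by
    intro b hb0
    by_cases hbA : ∃ e : ℕ, b = 5^e ∨ b = -(5^e)
    · obtain ⟨e, rfl | rfl⟩ := hbA
      · have h1 := (count_pow_eq_max hnts e).1
        have h2 := (count_pow_eq_max hntt e).1
        rw [hdig e] at h1; omega
      · have h1 := (count_pow_eq_max hnts e).2
        have h2 := (count_pow_eq_max hntt e).2
        rw [hdig e] at h1; omega
    · push_neg at hbA
      rw [Multiset.count_eq_zero_of_notMem (notA5_notMem hs.2.1 hb0 hbA),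
          Multiset.count_eq_zero_of_notMem (notA5_notMem ht.2.1 hb0 hbA)]
  have hfilter : s.filter (fun x => ¬ (0 = x)) = t.filter (fun x => ¬ (0 = x)) := by
    ext b
    rw [Multiset.count_filter, Multiset.count_filter]
    by_cases hb : (0:ℤ) = b
    · simp [hb]
    · simp only [hb, not_false_iff, if_pos]
      exact hcne b (fun h => hb h.symm)
  have hc0 : s.count 0 = t.count 0 := by
    have hs' : Multiset.count 0 s + Multiset.card (s.filter (fun x => ¬ ((0:ℤ) = x))) = 3 := by
      rw [Multiset.count_eq_card_filter_eq, ← hs.1, ← Multiset.card_add,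
        Multiset.filter_add_not]
    have ht' : Multiset.count 0 t + Multiset.card (t.filter (fun x => ¬ ((0:ℤ) = x))) = 3 := by
      rw [Multiset.count_eq_card_filter_eq, ← ht.1, ← Multiset.card_add,
        Multiset.filter_add_not]
    rw [hfilter] at hs'
    omega
  ext b
  by_cases hb : b = 0
  · subst hb; exact hc0
  · exact hcne b hb

lemma memA5_pow (n : ℕ) : ((5:ℤ)^n) ∈ A5 := Or.inl ⟨n, Or.inl rfl⟩
lemma memA5_negpow (n : ℕ) : (-((5:ℤ)^n)) ∈ A5 := Or.inl ⟨n, Or.inr rfl⟩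

lemma rep1 (n : ℕ) : IsRep A5 (3*5^n) ({(5:ℤ)^(n+1), -(5^n), -(5^n)} : Multiset ℤ) := by
  refine ⟨by simp, ?_, ?_⟩
  · intro x hx
    simp only [Multiset.insert_eq_cons, Multiset.mem_cons, Multiset.mem_singleton] at hx
    rcases hx with rfl | rfl | rfl
    exacts [memA5_pow _, memA5_negpow _, memA5_negpow _]
  · simp [pow_succ]; ring

lemma rep2 (n : ℕ) : IsRep A5 (3*5^n) ({(5:ℤ)^n, 5^n, 5^n} : Multiset ℤ) := by
  refine ⟨by simp, ?_, ?_⟩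
  · intro x hx
    simp only [Multiset.insert_eq_cons, Multiset.mem_cons, Multiset.mem_singleton] at hx
    rcases hx with rfl | rfl | rfl <;> exact memA5_pow _
  · simp; ring

lemma rep1' (n : ℕ) : IsRep A5 (-(3*5^n)) ({-((5:ℤ)^(n+1)), 5^n, 5^n} : Multiset ℤ) := by
  refine ⟨by simp, ?_, ?_⟩
  · intro x hx
    simp only [Multiset.insert_eq_cons, Multiset.mem_cons, Multiset.mem_singleton] at hx
    rcases hx with rfl | rfl | rfl
    exacts [memA5_negpow _, memA5_pow _, memA5_pow _]
  · simp [pow_succ]; ring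

lemma rep2' (n : ℕ) : IsRep A5 (-(3*5^n)) ({-((5:ℤ)^n), -(5^n), -(5^n)} : Multiset ℤ) := by
  refine ⟨by simp, ?_, ?_⟩
  · intro x hx
    simp only [Multiset.insert_eq_cons, Multiset.mem_cons, Multiset.mem_singleton] at hx
    rcases hx with rfl | rfl | rfl <;> exact memA5_negpow _
  · simp; ring

lemma nt1 (n : ℕ) : ¬TrivialTriple ({(5:ℤ)^(n+1), -(5^n), -(5^n)} : Multiset ℤ) := by
  rintro ⟨m, hm⟩
  have h1 : m ∈ ({(5:ℤ)^(n+1), -(5^n), -(5^n)} : Multiset ℤ) :=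
    Multiset.mem_of_le hm (by simp)
  have h2 : -m ∈ ({(5:ℤ)^(n+1), -(5^n), -(5^n)} : Multiset ℤ) :=
    Multiset.mem_of_le hm (by simp)
  simp only [Multiset.insert_eq_cons, Multiset.mem_cons, Multiset.mem_singleton] at h1 h2
  have hp := p5pos n
  have hps : (5:ℤ)^(n+1) = 5^n * 5 := pow_succ 5 n
  rcases h1 with rfl | rfl | rfl <;> rcases h2 with h | h | h <;> omega

lemma nt2 (n : ℕ) : ¬TrivialTriple ({(5:ℤ)^n, 5^n, 5^n} : Multiset ℤ) := by
  rintro ⟨m, hm⟩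
  have h1 : m ∈ ({(5:ℤ)^n, 5^n, 5^n} : Multiset ℤ) := Multiset.mem_of_le hm (by simp)
  have h2 : -m ∈ ({(5:ℤ)^n, 5^n, 5^n} : Multiset ℤ) := Multiset.mem_of_le hm (by simp)
  simp only [Multiset.insert_eq_cons, Multiset.mem_cons, Multiset.mem_singleton] at h1 h2
  have hp := p5pos n
  rcases h1 with rfl | rfl | rfl <;> rcases h2 with h | h | h <;> omega

lemma nt1' (n : ℕ) : ¬TrivialTriple ({-((5:ℤ)^(n+1)), 5^n, 5^n} : Multiset ℤ) := by
  rintro ⟨m, hm⟩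
  have h1 : m ∈ ({-((5:ℤ)^(n+1)), 5^n, 5^n} : Multiset ℤ) := Multiset.mem_of_le hm (by simp)
  have h2 : -m ∈ ({-((5:ℤ)^(n+1)), 5^n, 5^n} : Multiset ℤ) := Multiset.mem_of_le hm (by simp)
  simp only [Multiset.insert_eq_cons, Multiset.mem_cons, Multiset.mem_singleton] at h1 h2
  have hp := p5pos n
  have hps : (5:ℤ)^(n+1) = 5^n * 5 := pow_succ 5 n
  rcases h1 with rfl | rfl | rfl <;> rcases h2 with h | h | h <;> omega

lemma nt2' (n : ℕ) : ¬TrivialTriple ({-((5:ℤ)^n), -(5^n), -(5^n)} : Multiset ℤ) := by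
  rintro ⟨m, hm⟩
  have h1 : m ∈ ({-((5:ℤ)^n), -(5^n), -(5^n)} : Multiset ℤ) := Multiset.mem_of_le hm (by simp)
  have h2 : -m ∈ ({-((5:ℤ)^n), -(5^n), -(5^n)} : Multiset ℤ) := Multiset.mem_of_le hm (by simp)
  simp only [Multiset.insert_eq_cons, Multiset.mem_cons, Multiset.mem_singleton] at h1 h2
  have hp := p5pos n
  rcases h1 with rfl | rfl | rfl <;> rcases h2 with h | h | h <;> omega

lemma ne12 (n : ℕ) :
    ({(5:ℤ)^(n+1), -(5^n), -(5^n)} : Multiset ℤ) ≠ ({(5:ℤ)^n, 5^n, 5^n} : Multiset ℤ) := by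
  intro h
  have hmem : -((5:ℤ)^n) ∈ ({(5:ℤ)^n, 5^n, 5^n} : Multiset ℤ) := h ▸ (by simp)
  simp only [Multiset.insert_eq_cons, Multiset.mem_cons, Multiset.mem_singleton] at hmem
  have hp := p5pos n
  rcases hmem with h' | h' | h' <;> omega

lemma ne12' (n : ℕ) :
    ({-((5:ℤ)^(n+1)), 5^n, 5^n} : Multiset ℤ) ≠ ({-((5:ℤ)^n), -(5^n), -(5^n)} : Multiset ℤ) := by
  intro h
  have hmem : (5:ℤ)^n ∈ ({-((5:ℤ)^n), -(5^n), -(5^n)} : Multiset ℤ) := h ▸ (by simp)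
  simp only [Multiset.insert_eq_cons, Multiset.mem_cons, Multiset.mem_singleton] at hmem
  have hp := p5pos n
  rcases hmem with h' | h' | h' <;> omega

lemma threepow_not_A5 (n : ℕ) : (3*(5:ℤ)^n) ∉ A5 := by
  rintro (⟨k, hk | hk⟩ | h0)
  · have h3 : (3:ℤ) ∣ 5^k := ⟨5^n, hk.symm⟩
    have := Int.prime_three.dvd_of_dvd_pow h3
    norm_num at this
  · have := p5pos k; have := p5pos n; omega
  · simp only [Set.mem_singleton_iff] at h0
    have := p5pos n; omega

lemma negthreepow_not_A5 (n : ℕ) : (-(3*(5:ℤ)^n)) ∉ A5 := by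
  rintro (⟨k, hk | hk⟩ | h0)
  · have := p5pos k; have := p5pos n; omega
  · have h3 : (3:ℤ) ∣ 5^k := ⟨5^n, by omega⟩
    have := Int.prime_three.dvd_of_dvd_pow h3
    norm_num at this
  · simp only [Set.mem_singleton_iff] at h0
    have := p5pos n; omega

lemma no_trivial_rep {D : ℤ} (hD : D ∉ A5) {s : Multiset ℤ} (hs : IsRep A5 D s) :
    ¬TrivialTriple s := by
  rintro ⟨m, hm⟩
  obtain ⟨u, rfl⟩ := Multiset.le_iff_exists_add.mp hm
  have hcard : Multiset.card u = 1 := by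
    have := hs.1
    simp only [Multiset.card_add, Multiset.insert_eq_cons, Multiset.card_cons,
      Multiset.card_singleton] at this
    omega
  obtain ⟨x, rfl⟩ := Multiset.card_eq_one.mp hcard
  have hx : x ∈ A5 := hs.2.1 x (by simp)
  have hsum := hs.2.2
  simp only [Multiset.sum_add, Multiset.insert_eq_cons, Multiset.sum_cons,
    Multiset.sum_singleton] at hsum
  have hxD : x = D := by linarith
  exact hD (hxD ▸ hx)




theorem stmt_5 :
    {D : ℤ | IsP3Exception A5 D} = {D : ℤ | ∃ n : ℕ, D = 3 * 5 ^ n ∨ D = -(3 * 5 ^ n)} ∧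
    ∀ n : ℕ, {s : Multiset ℤ | IsRep A5 (3 * 5 ^ n) s} =
      {({(5 : ℤ) ^ (n + 1), -(5 ^ n), -(5 ^ n)} : Multiset ℤ),
       ({(5 : ℤ) ^ n, 5 ^ n, 5 ^ n} : Multiset ℤ)} := by
  constructor
  · ext D
    simp only [Set.mem_setOf_eq]
    constructor
    · rintro ⟨s, t, hs, ht, hnts, hntt, hne⟩
      rcases triple_or_bound hs hnts with ⟨n, _, hD⟩ | ⟨n, _, hD⟩ | hbs
      · exact ⟨n, Or.inl hD⟩
      · exact ⟨n, Or.inr hD⟩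
      rcases triple_or_bound ht hntt with ⟨n, _, hD⟩ | ⟨n, _, hD⟩ | hbt
      · exact ⟨n, Or.inl hD⟩
      · exact ⟨n, Or.inr hD⟩
      exact absurd (rep_eq hs ht hnts hntt hbs hbt) hne
    · rintro ⟨n, rfl | rfl⟩
      · exact ⟨_, _, rep1 n, rep2 n, nt1 n, nt2 n, ne12 n⟩
      · exact ⟨_, _, rep1' n, rep2' n, nt1' n, nt2' n, ne12' n⟩
  · intro n
    ext s
    simp only [Set.mem_setOf_eq, Set.mem_insert_iff, Set.mem_singleton_iff]
    constructor
    · intro hs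
      have hnts := no_trivial_rep (threepow_not_A5 n) hs
      have ht := rep1 n
      have hntt := nt1 n
      rcases triple_or_bound hs hnts with ⟨m, hsm, hD⟩ | ⟨m, hsm, hD⟩ | hbs
      · right
        have h5 : (5:ℤ)^m = 5^n := by linarith
        rw [p5inj h5] at hsm
        exact hsm
      · exfalso; have := p5pos m; have := p5pos n; omega
      · rcases triple_or_bound ht hntt with ⟨m, htm, _⟩ | ⟨m, htm, _⟩ | hbt
        · exfalso
          have hmem : -((5:ℤ)^n) ∈ ({(5:ℤ)^m, 5^m, 5^m} : Multiset ℤ) := htm ▸ (by simp)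
          simp only [Multiset.insert_eq_cons, Multiset.mem_cons, Multiset.mem_singleton] at hmem
          have := p5pos m; have := p5pos n
          rcases hmem with h' | h' | h' <;> omega
        · exfalso
          have hmem : (5:ℤ)^(n+1) ∈ ({-((5:ℤ)^m), -(5^m), -(5^m)} : Multiset ℤ) := htm ▸ (by simp)
          simp only [Multiset.insert_eq_cons, Multiset.mem_cons, Multiset.mem_singleton] at hmem
          have := p5pos m; have := p5pos (n+1)
          rcases hmem with h' | h' | h' <;> omega
        · exact Or.inl (rep_eq hs ht hnts hntt hbs hbt)
    · rintro (rfl | rfl)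
      · exact rep1 n
      · exact rep2 n
end

section
/- Let A₄ = {±4ⁿ : n ≥ 0} ∪ {0}. Then the set of P(3) exceptions in A₄ + A₄ + A₄ equals {±2·4ⁿ : n ≥ 0} ∪ {±3·4ⁿ : n ≥ 0}. Every exception is, after multiplication by ±4ⁿ, given by 2 = 4 − 1 − 1 = 1 + 1 + 0 or 3 = 4 − 1 + 0 = 1 + 1 + 1. -/
/-- `A₄ = {±4ⁿ : n ≥ 0} ∪ {0}`. -/
def A4 : Set ℤ := {x : ℤ | ∃ n : ℕ, x = 4 ^ n ∨ x = -(4 ^ n)} ∪ {0}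


lemma hA0 : (0:ℤ) ∈ A4 := Or.inr rfl
lemma hApow (n : ℕ) : ((4:ℤ)^n) ∈ A4 := Or.inl ⟨n, Or.inl rfl⟩
lemma hAnegpow (n : ℕ) : (-(4:ℤ)^n) ∈ A4 := Or.inl ⟨n, Or.inr rfl⟩
lemma hA1 : (1:ℤ) ∈ A4 := Or.inl ⟨0, Or.inl (by norm_num)⟩
lemma hAmul {x : ℤ} (hx : x ∈ A4) : 4*x ∈ A4 := by
  rcases hx with ⟨n, h | h⟩ | h
  · exact Or.inl ⟨n+1, Or.inl (by rw [h]; ring)⟩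
  · exact Or.inl ⟨n+1, Or.inr (by rw [h]; ring)⟩
  · simp only [Set.mem_singleton_iff] at h; subst h; simpa using hA0
lemma hAdec {x : ℤ} (hx : x ∈ A4) : x = 1 ∨ x = -1 ∨ ∃ a, a ∈ A4 ∧ x = 4*a := by
  rcases hx with ⟨n, h | h⟩ | h
  · cases n with
    | zero => left; simpa using h
    | succ m => exact Or.inr (Or.inr ⟨4^m, hApow m, by rw [h]; ring⟩)
  · cases n with
    | zero => right; left; simpa using h
    | succ m => exact Or.inr (Or.inr ⟨-(4^m), hAnegpow m, by rw [h]; ring⟩)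
  · simp only [Set.mem_singleton_iff] at h
    exact Or.inr (Or.inr ⟨0, hA0, by omega⟩)

lemma hsum1 {a b : ℤ} (ha : a ∈ A4) (hb : b ∈ A4) (h : a + b = 1) :
    (a = 0 ∧ b = 1) ∨ (a = 1 ∧ b = 0) := by
  rcases hAdec ha with rfl | rfl | ⟨a', ha', rfl⟩ <;>
    rcases hAdec hb with rfl | rfl | ⟨b', hb', rfl⟩ <;> omega

lemma H1 {a b : ℤ} (ha : a ∈ A4) (hb : b ∈ A4) (h : b = a + 1) :
    (a = 0 ∧ b = 1) ∨ (a = -1 ∧ b = 0) := by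
  rcases hAdec ha with rfl | rfl | ⟨a', ha', rfl⟩ <;>
    rcases hAdec hb with rfl | rfl | ⟨b', hb', rfl⟩ <;> omega

lemma hG {a b : ℤ} (ha : a ∈ A4) (hb : b ∈ A4) (h : b = a + 4) : a = 0 ∨ a = -4 := by
  rcases hAdec ha with rfl | rfl | ⟨a', ha', rfl⟩ <;>
    rcases hAdec hb with rfl | rfl | ⟨b', hb', rfl⟩ <;> try omega
  have := H1 ha' hb' (by omega); omega

lemma notA4_2 : ∀ n : ℕ, (2 * 4^n : ℤ) ∉ A4 := by
  intro n
  induction n with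
  | zero => intro h; rcases hAdec h with h1 | h1 | ⟨a, _, h1⟩ <;> omega
  | succ m ih =>
    intro h
    rcases hAdec h with h1 | h1 | ⟨a, ha, h1⟩
    · have : (1:ℤ) ≤ 4^(m+1) := one_le_pow₀ (by norm_num)
      omega
    · have : (1:ℤ) ≤ 4^(m+1) := one_le_pow₀ (by norm_num)
      omega
    · have h2 : (4:ℤ)^(m+1) = 4 * 4^m := by ring
      have : a = 2 * 4^m := by omega
      exact ih (this ▸ ha)

lemma notA4_3 : ∀ n : ℕ, (3 * 4^n : ℤ) ∉ A4 := by
  intro n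
  induction n with
  | zero => intro h; rcases hAdec h with h1 | h1 | ⟨a, _, h1⟩ <;> omega
  | succ m ih =>
    intro h
    rcases hAdec h with h1 | h1 | ⟨a, ha, h1⟩
    · have : (1:ℤ) ≤ 4^(m+1) := one_le_pow₀ (by norm_num)
      omega
    · have : (1:ℤ) ≤ 4^(m+1) := one_le_pow₀ (by norm_num)
      omega
    · have h2 : (4:ℤ)^(m+1) = 4 * 4^m := by ring
      have : a = 3 * 4^m := by omega
      exact ih (this ▸ ha)

lemma ms2 {α : Type*} (a b : α) : ({a,b} : Multiset α) = {b,a} := Multiset.cons_swap a b 0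
lemma ms12 {α : Type*} (a b c : α) : ({a,b,c} : Multiset α) = {b,a,c} := Multiset.cons_swap a b {c}
lemma ms23 {α : Type*} (a b c : α) : ({a,b,c} : Multiset α) = {a,c,b} :=
  congrArg (a ::ₘ ·) (Multiset.cons_swap b c 0)
lemma ms231 {α : Type*} (a b c : α) : ({a,b,c} : Multiset α) = {b,c,a} :=
  (ms12 a b c).trans (ms23 b a c)
lemma ms312 {α : Type*} (a b c : α) : ({a,b,c} : Multiset α) = {c,a,b} :=
  (ms23 a b c).trans (ms12 a c b)
lemma ms321 {α : Type*} (a b c : α) : ({a,b,c} : Multiset α) = {c,b,a} :=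
  (ms12 a b c).trans (ms312 b a c)

lemma repIff (D a b c : ℤ) :
    IsRep A4 D {a,b,c} ↔ (a ∈ A4 ∧ b ∈ A4 ∧ c ∈ A4 ∧ a + b + c = D) := by
  unfold IsRep
  simp only [Multiset.insert_eq_cons, Multiset.card_cons, Multiset.card_singleton,
    Multiset.mem_cons, Multiset.mem_singleton, Multiset.sum_cons, Multiset.sum_singleton,
    forall_eq_or_imp, forall_eq]
  constructor
  · rintro ⟨-, ⟨h1, h2, h3⟩, h4⟩; exact ⟨h1, h2, h3, by omega⟩
  · rintro ⟨h1, h2, h3, h4⟩; exact ⟨trivial, ⟨h1, h2, h3⟩, by omega⟩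

lemma trivIff (a b c : ℤ) :
    TrivialTriple {a,b,c} ↔ (b = -a ∨ c = -a ∨ c = -b) := by
  constructor
  · rintro ⟨m, hle⟩
    have h1 : m ∈ ({a,b,c} : Multiset ℤ) := Multiset.mem_of_le hle (by simp)
    have h2 : -m ∈ ({a,b,c} : Multiset ℤ) := Multiset.mem_of_le hle (by simp)
    by_cases hm : m = 0
    · subst hm
      have hc := Multiset.le_iff_count.mp hle 0
      simp only [neg_zero, Multiset.insert_eq_cons, Multiset.count_cons, Multiset.count_singleton] at hc
      split_ifs at hc <;> omega
    · simp only [Multiset.insert_eq_cons, Multiset.mem_cons, Multiset.mem_singleton] at h1 h2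
      omega
  · intro h
    rcases h with h | h | h
    · refine ⟨a, ?_⟩
      rw [show -a = b by omega]
      exact Multiset.cons_le_cons a (Multiset.cons_le_cons b (Multiset.zero_le _))
    · refine ⟨a, ?_⟩
      rw [show -a = c by omega]
      exact Multiset.cons_le_cons a (Multiset.le_cons_self _ b)
    · refine ⟨b, ?_⟩
      rw [show -b = c by omega]
      exact Multiset.le_cons_self _ a
lemma hAneg1 : (-1:ℤ) ∈ A4 := Or.inl ⟨0, Or.inr (by norm_num)⟩

lemma hsum4 {v w : ℤ} (hv : v ∈ A4) (hw : w ∈ A4) (h4v : (4:ℤ) ∣ v) (h4w : (4:ℤ) ∣ w)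
    (h : v + w = 4) : (v = 0 ∧ w = 4) ∨ (v = 4 ∧ w = 0) := by
  rcases hAdec hv with rfl | rfl | ⟨a, ha, rfl⟩ <;>
    rcases hAdec hw with rfl | rfl | ⟨b, hb, rfl⟩ <;> try omega
  have := hsum1 ha hb (by omega); omega

lemma shape0 {D x y z : ℤ} (hx : x ∈ A4) (hy : y ∈ A4) (hz : z ∈ A4) (hsum : x + y + z = D) :
    (∃ m w, w ∈ A4 ∧ w = D ∧ ({x,y,z} : Multiset ℤ) = {m, -m, w}) ∨
    (∃ a b c, a ∈ A4 ∧ b ∈ A4 ∧ c ∈ A4 ∧ x = 4*a ∧ y = 4*b ∧ z = 4*c) ∨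
    (∃ w, w ∈ A4 ∧ (4:ℤ) ∣ w ∧ D = 2 + w ∧ ({x,y,z} : Multiset ℤ) = {1, 1, w}) ∨
    (∃ w, w ∈ A4 ∧ (4:ℤ) ∣ w ∧ D = w - 2 ∧ ({x,y,z} : Multiset ℤ) = {-1, -1, w}) ∨
    (∃ v w, v ∈ A4 ∧ w ∈ A4 ∧ (4:ℤ) ∣ v ∧ (4:ℤ) ∣ w ∧ D = 1 + v + w ∧
      ({x,y,z} : Multiset ℤ) = {1, v, w}) ∨
    (∃ v w, v ∈ A4 ∧ w ∈ A4 ∧ (4:ℤ) ∣ v ∧ (4:ℤ) ∣ w ∧ D = v + w - 1 ∧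
      ({x,y,z} : Multiset ℤ) = {-1, v, w}) ∨
    (D = 3 ∧ ({x,y,z} : Multiset ℤ) = {1,1,1}) ∨
    (D = -3 ∧ ({x,y,z} : Multiset ℤ) = {-1,-1,-1}) := by
  rcases hAdec hx with rfl | rfl | ⟨a, ha, rfl⟩ <;>
    rcases hAdec hy with rfl | rfl | ⟨b, hb, rfl⟩ <;>
      rcases hAdec hz with rfl | rfl | ⟨c, hc, rfl⟩
  -- (+,+,+)
  · exact Or.inr <| Or.inr <| Or.inr <| Or.inr <| Or.inr <| Or.inr <| Or.inl ⟨by omega, rfl⟩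
  -- (+,+,-)
  · exact Or.inl ⟨1, 1, hA1, by omega, ms23 1 1 (-1)⟩
  -- (+,+,M)
  · exact Or.inr <| Or.inr <| Or.inl ⟨4*c, hAmul hc, ⟨c, rfl⟩, by omega, rfl⟩
  -- (+,-,+)
  · exact Or.inl ⟨1, 1, hA1, by omega, rfl⟩
  -- (+,-,-)
  · exact Or.inl ⟨1, -1, hAneg1, by omega, rfl⟩
  -- (+,-,M)
  · exact Or.inl ⟨1, 4*c, hAmul hc, by omega, rfl⟩
  -- (+,M,+)
  · exact Or.inr <| Or.inr <| Or.inl ⟨4*b, hAmul hb, ⟨b, rfl⟩, by omega, ms23 1 (4*b) 1⟩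
  -- (+,M,-)
  · exact Or.inl ⟨1, 4*b, hAmul hb, by omega, ms23 1 (4*b) (-1)⟩
  -- (+,M,M)
  · exact Or.inr <| Or.inr <| Or.inr <| Or.inr <| Or.inl
      ⟨4*b, 4*c, hAmul hb, hAmul hc, ⟨b, rfl⟩, ⟨c, rfl⟩, by omega, rfl⟩
  -- (-,+,+)
  · exact Or.inl ⟨1, 1, hA1, by omega, ms12 (-1) 1 1⟩
  -- (-,+,-)
  · exact Or.inl ⟨1, -1, hAneg1, by omega, ms12 (-1) 1 (-1)⟩
  -- (-,+,M)
  · exact Or.inl ⟨1, 4*c, hAmul hc, by omega, ms12 (-1) 1 (4*c)⟩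
  -- (-,-,+)
  · exact Or.inl ⟨1, -1, hAneg1, by omega,
      (ms23 (-1) (-1) 1).trans (ms12 (-1) 1 (-1))⟩
  -- (-,-,-)
  · exact Or.inr <| Or.inr <| Or.inr <| Or.inr <| Or.inr <| Or.inr <| Or.inr ⟨by omega, rfl⟩
  -- (-,-,M)
  · exact Or.inr <| Or.inr <| Or.inr <| Or.inl ⟨4*c, hAmul hc, ⟨c, rfl⟩, by omega, rfl⟩
  -- (-,M,+)
  · exact Or.inl ⟨1, 4*b, hAmul hb, by omega, (ms23 (-1) (4*b) 1).trans (ms12 (-1) 1 (4*b))⟩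
  -- (-,M,-)
  · exact Or.inr <| Or.inr <| Or.inr <| Or.inl ⟨4*b, hAmul hb, ⟨b, rfl⟩, by omega, ms23 (-1) (4*b) (-1)⟩
  -- (-,M,M)
  · exact Or.inr <| Or.inr <| Or.inr <| Or.inr <| Or.inr <| Or.inl
      ⟨4*b, 4*c, hAmul hb, hAmul hc, ⟨b, rfl⟩, ⟨c, rfl⟩, by omega, rfl⟩
  -- (M,+,+)
  · exact Or.inr <| Or.inr <| Or.inl ⟨4*a, hAmul ha, ⟨a, rfl⟩, by omega, ms231 (4*a) 1 1⟩
  -- (M,+,-)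
  · exact Or.inl ⟨1, 4*a, hAmul ha, by omega, ms231 (4*a) 1 (-1)⟩
  -- (M,+,M)
  · exact Or.inr <| Or.inr <| Or.inr <| Or.inr <| Or.inl
      ⟨4*a, 4*c, hAmul ha, hAmul hc, ⟨a, rfl⟩, ⟨c, rfl⟩, by omega, ms12 (4*a) 1 (4*c)⟩
  -- (M,-,+)
  · exact Or.inl ⟨1, 4*a, hAmul ha, by omega, ms321 (4*a) (-1) 1⟩
  -- (M,-,-)
  · exact Or.inr <| Or.inr <| Or.inr <| Or.inl ⟨4*a, hAmul ha, ⟨a, rfl⟩, by omega, ms231 (4*a) (-1) (-1)⟩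
  -- (M,-,M)
  · exact Or.inr <| Or.inr <| Or.inr <| Or.inr <| Or.inr <| Or.inl
      ⟨4*a, 4*c, hAmul ha, hAmul hc, ⟨a, rfl⟩, ⟨c, rfl⟩, by omega, ms12 (4*a) (-1) (4*c)⟩
  -- (M,M,+)
  · exact Or.inr <| Or.inr <| Or.inr <| Or.inr <| Or.inl
      ⟨4*a, 4*b, hAmul ha, hAmul hb, ⟨a, rfl⟩, ⟨b, rfl⟩, by omega, ms312 (4*a) (4*b) 1⟩
  -- (M,M,-)
  · exact Or.inr <| Or.inr <| Or.inr <| Or.inr <| Or.inr <| Or.inl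
      ⟨4*a, 4*b, hAmul ha, hAmul hb, ⟨a, rfl⟩, ⟨b, rfl⟩, by omega, ms312 (4*a) (4*b) (-1)⟩
  -- (M,M,M)
  · exact Or.inr <| Or.inl ⟨a, b, c, ha, hb, hc, rfl, rfl, rfl⟩
def ExcP (D : ℤ) : Prop :=
  ∃ n : ℕ, D = 2 * 4 ^ n ∨ D = -(2 * 4 ^ n) ∨ D = 3 * 4 ^ n ∨ D = -(3 * 4 ^ n)

lemma excMul {d : ℤ} (h : ExcP d) : ExcP (4 * d) := by
  obtain ⟨n, h⟩ := h
  refine ⟨n + 1, ?_⟩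
  have : (4:ℤ)^(n+1) = 4 * 4^n := by ring
  rcases h with h | h | h | h
  · left; rw [h]; ring
  · right; left; rw [h]; ring
  · right; right; left; rw [h]; ring
  · right; right; right; rw [h]; ring

lemma map4triple (a b c : ℤ) :
    Multiset.map (fun t => 4*t) ({a,b,c} : Multiset ℤ) = {4*a, 4*b, 4*c} := by
  simp

lemma map4pair (a b : ℤ) :
    Multiset.map (fun t => 4*t) ({a,b} : Multiset ℤ) = {4*a, 4*b} := by
  simp

lemma zeroTriv : ∀ N : ℕ, ∀ x y z : ℤ, x.natAbs + y.natAbs + z.natAbs ≤ N →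
    x ∈ A4 → y ∈ A4 → z ∈ A4 → x + y + z = 0 → TrivialTriple {x,y,z} := by
  intro N
  induction N with
  | zero => intro x y z hN _ _ _ _; rw [trivIff]; omega
  | succ N ih =>
    intro x y z hN hx hy hz hsum
    rcases shape0 hx hy hz hsum with
        ⟨m, w, hw, hwD, hs⟩ | ⟨a, b, c, ha, hb, hc, rfl, rfl, rfl⟩ |
        ⟨w, hw, h4, hD, hs⟩ | ⟨w, hw, h4, hD, hs⟩ |
        ⟨v, w, hv, hw, h4v, h4w, hD, hs⟩ | ⟨v, w, hv, hw, h4v, h4w, hD, hs⟩ |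
        ⟨hD, hs⟩ | ⟨hD, hs⟩
    · exact ⟨m, hs ▸ Multiset.cons_le_cons m (Multiset.cons_le_cons (-m) (Multiset.zero_le _))⟩
    · by_cases h0 : a = 0 ∧ b = 0 ∧ c = 0
      · obtain ⟨rfl, rfl, rfl⟩ := h0
        rw [trivIff]; omega
      · have h1 : (4*a).natAbs = 4 * a.natAbs := by
          rw [Int.natAbs_mul]; rfl
        have h2 : (4*b).natAbs = 4 * b.natAbs := by
          rw [Int.natAbs_mul]; rfl
        have h3 : (4*c).natAbs = 4 * c.natAbs := by
          rw [Int.natAbs_mul]; rfl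
        have ht : TrivialTriple {a,b,c} :=
          ih a b c (by omega) ha hb hc (by omega)
        rw [trivIff] at ht ⊢; omega
    · omega
    · omega
    · omega
    · omega
    · omega
    · omega

lemma pshape {c x y : ℤ} (hx : x ∈ A4) (hy : y ∈ A4) (hsum : x + y = c) :
    (∃ a b, a ∈ A4 ∧ b ∈ A4 ∧ x = 4*a ∧ y = 4*b) ∨
    (∃ w, w ∈ A4 ∧ (4:ℤ) ∣ w ∧ c = 1 + w ∧ ({x,y} : Multiset ℤ) = {1, w}) ∨
    (∃ w, w ∈ A4 ∧ (4:ℤ) ∣ w ∧ c = w - 1 ∧ ({x,y} : Multiset ℤ) = {-1, w}) ∨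
    (c = 2 ∧ ({x,y} : Multiset ℤ) = {1,1}) ∨
    (c = -2 ∧ ({x,y} : Multiset ℤ) = {-1,-1}) ∨ c = 0 := by
  rcases hAdec hx with rfl | rfl | ⟨a, ha, rfl⟩ <;>
    rcases hAdec hy with rfl | rfl | ⟨b, hb, rfl⟩
  · exact Or.inr <| Or.inr <| Or.inr <| Or.inl ⟨by omega, rfl⟩
  · exact Or.inr <| Or.inr <| Or.inr <| Or.inr <| Or.inr (by omega)
  · exact Or.inr <| Or.inl ⟨4*b, hAmul hb, ⟨b, rfl⟩, by omega, rfl⟩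
  · exact Or.inr <| Or.inr <| Or.inr <| Or.inr <| Or.inr (by omega)
  · exact Or.inr <| Or.inr <| Or.inr <| Or.inr <| Or.inl ⟨by omega, rfl⟩
  · exact Or.inr <| Or.inr <| Or.inl ⟨4*b, hAmul hb, ⟨b, rfl⟩, by omega, rfl⟩
  · exact Or.inr <| Or.inl ⟨4*a, hAmul ha, ⟨a, rfl⟩, by omega, ms2 (4*a) 1⟩
  · exact Or.inr <| Or.inr <| Or.inl ⟨4*a, hAmul ha, ⟨a, rfl⟩, by omega, ms2 (4*a) (-1)⟩
  · exact Or.inl ⟨a, b, ha, hb, rfl, rfl⟩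

lemma pairU : ∀ N : ℕ, ∀ c x y x' y' : ℤ, c.natAbs ≤ N →
    x ∈ A4 → y ∈ A4 → x' ∈ A4 → y' ∈ A4 → x + y = c → x' + y' = c → c ≠ 0 →
    ({x,y} : Multiset ℤ) = {x',y'} := by
  intro N
  induction N with
  | zero => intro c x y x' y' hN _ _ _ _ _ _ hc; omega
  | succ N ih =>
    intro c x y x' y' hN hx hy hx' hy' h1 h2 hc
    rcases pshape hx hy h1 with
        ⟨a, b, ha, hb, rfl, rfl⟩ | ⟨w, hw, h4, hcw, hs⟩ | ⟨w, hw, h4, hcw, hs⟩ |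
        ⟨hc2, hs⟩ | ⟨hc2, hs⟩ | h0 <;>
      rcases pshape hx' hy' h2 with
        ⟨a', b', ha', hb', rfl, rfl⟩ | ⟨w', hw', h4', hcw', hs'⟩ | ⟨w', hw', h4', hcw', hs'⟩ |
        ⟨hc2', hs'⟩ | ⟨hc2', hs'⟩ | h0' <;>
      try omega
    · -- both divisible
      have hNa : c.natAbs = 4 * (a+b).natAbs := by
        have : c = 4 * (a + b) := by omega
        rw [this, Int.natAbs_mul]; rfl
      have := ih (a+b) a b a' b' (by omega) ha hb ha' hb' rfl (by omega) (by omega)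
      have h5 := congrArg (Multiset.map (fun t => 4*t)) this
      rw [map4pair, map4pair] at h5
      exact h5
    · have : w = w' := by omega
      subst this; exact hs.trans hs'.symm
    · have : w = w' := by omega
      subst this; exact hs.trans hs'.symm
    · exact hs.trans hs'.symm
    · exact hs.trans hs'.symm
lemma trivOfEq {s : Multiset ℤ} {m w : ℤ} (h : s = {m, -m, w}) : TrivialTriple s :=
  ⟨m, by rw [h]; exact Multiset.cons_le_cons _ (Multiset.cons_le_cons _ (Multiset.zero_le _))⟩

lemma masterT : ∀ N : ℕ, ∀ D x y z x' y' z' : ℤ, D.natAbs ≤ N →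
    x ∈ A4 → y ∈ A4 → z ∈ A4 → x' ∈ A4 → y' ∈ A4 → z' ∈ A4 →
    x + y + z = D → x' + y' + z' = D →
    ¬TrivialTriple {x,y,z} → ¬TrivialTriple {x',y',z'} →
    ({x,y,z} : Multiset ℤ) = {x',y',z'} ∨ ExcP D := by
  intro N
  induction N with
  | zero =>
    intro D x y z x' y' z' hN hx hy hz hx' hy' hz' h1 h2 hTs hTt
    exact absurd (zeroTriv _ x y z le_rfl hx hy hz (by omega)) hTs
  | succ N ih =>
    intro D x y z x' y' z' hN hx hy hz hx' hy' hz' h1 h2 hTs hTt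
    by_cases hD0 : D = 0
    · exact absurd (zeroTriv _ x y z le_rfl hx hy hz (by omega)) hTs
    rcases shape0 hx hy hz h1 with
        ⟨m, w, hw, hwD, hs⟩ | ⟨a, b, c, ha, hb, hc, rfl, rfl, rfl⟩ |
        ⟨w, hw, h4, hD, hs⟩ | ⟨w, hw, h4, hD, hs⟩ |
        ⟨v, w, hv, hw, h4v, h4w, hD, hs⟩ | ⟨v, w, hv, hw, h4v, h4w, hD, hs⟩ |
        ⟨hD, hs⟩ | ⟨hD, hs⟩
    · exact absurd (trivOfEq hs) hTs
    · -- s all divisible by 4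
      rcases shape0 hx' hy' hz' h2 with
          ⟨m, w, hw, hwD, ht⟩ | ⟨a', b', c', ha', hb', hc', rfl, rfl, rfl⟩ |
          ⟨w, hw, h4, hD, ht⟩ | ⟨w, hw, h4, hD, ht⟩ |
          ⟨v, w, hv, hw, h4v, h4w, hD, ht⟩ | ⟨v, w, hv, hw, h4v, h4w, hD, ht⟩ |
          ⟨hD, ht⟩ | ⟨hD, ht⟩
      · exact absurd (trivOfEq ht) hTt
      · have hTs' : ¬ TrivialTriple {a,b,c} := by rw [trivIff] at hTs ⊢; omega
        have hTt' : ¬ TrivialTriple {a',b',c'} := by rw [trivIff] at hTt ⊢; omega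
        have hmeas : D.natAbs = 4 * (a+b+c).natAbs := by
          have hD4 : D = 4*(a+b+c) := by omega
          rw [hD4, Int.natAbs_mul]; rfl
        rcases ih (a+b+c) a b c a' b' c' (by omega) ha hb hc ha' hb' hc' rfl (by omega)
            hTs' hTt' with heq | hE
        · left
          have h5 := congrArg (Multiset.map (fun t => 4*t)) heq
          rw [map4triple, map4triple] at h5; exact h5
        · right
          have hD4 : D = 4 * (a+b+c) := by omega
          rw [hD4]; exact excMul hE
      · omega
      · omega
      · omega
      · omega
      · omega
      · omega
    · -- s = {1,1,w}, D = 2 + w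
      rcases shape0 hx' hy' hz' h2 with
          ⟨m, w', hw', hwD, ht⟩ | ⟨a', b', c', ha', hb', hc', rfl, rfl, rfl⟩ |
          ⟨w', hw', h4', hD', ht⟩ | ⟨w', hw', h4', hD', ht⟩ |
          ⟨v', w', hv', hw', h4v', h4w', hD', ht⟩ | ⟨v', w', hv', hw', h4v', h4w', hD', ht⟩ |
          ⟨hD', ht⟩ | ⟨hD', ht⟩
      · exact absurd (trivOfEq ht) hTt
      · omega
      · have hww : w = w' := by omega
        left; rw [hs, ht, hww]
      · right
        have := hG hw hw' (by omega)
        refine ⟨0, ?_⟩; norm_num; omega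
      · omega
      · omega
      · omega
      · omega
    · -- s = {-1,-1,w}, D = w - 2
      rcases shape0 hx' hy' hz' h2 with
          ⟨m, w', hw', hwD, ht⟩ | ⟨a', b', c', ha', hb', hc', rfl, rfl, rfl⟩ |
          ⟨w', hw', h4', hD', ht⟩ | ⟨w', hw', h4', hD', ht⟩ |
          ⟨v', w', hv', hw', h4v', h4w', hD', ht⟩ | ⟨v', w', hv', hw', h4v', h4w', hD', ht⟩ |
          ⟨hD', ht⟩ | ⟨hD', ht⟩
      · exact absurd (trivOfEq ht) hTt
      · omega
      · right
        have := hG hw' hw (by omega)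
        refine ⟨0, ?_⟩; norm_num; omega
      · have hww : w = w' := by omega
        left; rw [hs, ht, hww]
      · omega
      · omega
      · omega
      · omega
    · -- s = {1,v,w}, D = 1 + v + w
      rcases shape0 hx' hy' hz' h2 with
          ⟨m, w', hw', hwD, ht⟩ | ⟨a', b', c', ha', hb', hc', rfl, rfl, rfl⟩ |
          ⟨w', hw', h4', hD', ht⟩ | ⟨w', hw', h4', hD', ht⟩ |
          ⟨v', w', hv', hw', h4v', h4w', hD', ht⟩ | ⟨v', w', hv', hw', h4v', h4w', hD', ht⟩ |
          ⟨hD', ht⟩ | ⟨hD', ht⟩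
      · exact absurd (trivOfEq ht) hTt
      · omega
      · omega
      · omega
      · have hvw : v + w ≠ 0 := by
          intro h0
          apply hTs; rw [hs, trivIff]; omega
        have hp := pairU (v+w).natAbs (v+w) v w v' w' le_rfl hv hw hv' hw' rfl (by omega) hvw
        left; rw [hs, ht]
        exact congrArg (1 ::ₘ ·) hp
      · omega
      · omega
      · right; refine ⟨0, ?_⟩; norm_num; omega
    · -- s = {-1,v,w}, D = v + w - 1
      rcases shape0 hx' hy' hz' h2 with
          ⟨m, w', hw', hwD, ht⟩ | ⟨a', b', c', ha', hb', hc', rfl, rfl, rfl⟩ |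
          ⟨w', hw', h4', hD', ht⟩ | ⟨w', hw', h4', hD', ht⟩ |
          ⟨v', w', hv', hw', h4v', h4w', hD', ht⟩ | ⟨v', w', hv', hw', h4v', h4w', hD', ht⟩ |
          ⟨hD', ht⟩ | ⟨hD', ht⟩
      · exact absurd (trivOfEq ht) hTt
      · omega
      · omega
      · omega
      · omega
      · have hvw : v + w ≠ 0 := by
          intro h0
          apply hTs; rw [hs, trivIff]; omega
        have hp := pairU (v+w).natAbs (v+w) v w v' w' le_rfl hv hw hv' hw' rfl (by omega) hvw
        left; rw [hs, ht]
        exact congrArg ((-1) ::ₘ ·) hp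
      · right; refine ⟨0, ?_⟩; norm_num; omega
      · omega
    · right; refine ⟨0, ?_⟩; norm_num; omega
    · right; refine ⟨0, ?_⟩; norm_num; omega
lemma part2 (n : ℕ) : {s : Multiset ℤ | IsRep A4 (2 * 4 ^ n) s} =
    {({(4 : ℤ) ^ (n + 1), -(4 ^ n), -(4 ^ n)} : Multiset ℤ),
     ({(4 : ℤ) ^ n, 4 ^ n, 0} : Multiset ℤ)} := by
  induction n with
  | zero =>
    ext s
    simp only [Set.mem_setOf_eq, Set.mem_insert_iff, Set.mem_singleton_iff]
    constructor
    · intro hrep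
      obtain ⟨a, b, c, rfl⟩ := Multiset.card_eq_three.mp hrep.1
      rw [repIff] at hrep
      obtain ⟨ha, hb, hc, hsum⟩ := hrep
      norm_num at hsum
      rcases shape0 ha hb hc hsum with
          ⟨m, w, hw, hwD, hs⟩ | ⟨a₀, b₀, c₀, ha₀, hb₀, hc₀, rfl, rfl, rfl⟩ |
          ⟨w, hw, h4, hD, hs⟩ | ⟨w, hw, h4, hD, hs⟩ |
          ⟨v, w, hv, hw, h4v, h4w, hD, hs⟩ | ⟨v, w, hv, hw, h4v, h4w, hD, hs⟩ |
          ⟨hD, hs⟩ | ⟨hD, hs⟩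
      · exact absurd (hwD ▸ hw) (by have := notA4_2 0; norm_num at this ⊢; exact this)
      · omega
      · right; rw [hs, show w = (0:ℤ) by omega]; norm_num
      · left; rw [hs, show w = (4:ℤ) by omega, ms312 (-1) (-1) (4:ℤ)]; norm_num
      · omega
      · omega
      · omega
      · omega
    · intro h
      rcases h with rfl | rfl
      · exact (repIff _ _ _ _).mpr ⟨hApow 1, hAnegpow 0, hAnegpow 0, by norm_num⟩
      · exact (repIff _ _ _ _).mpr ⟨hApow 0, hApow 0, hA0, by norm_num⟩
  | succ m ih =>
    have hk : (1:ℤ) ≤ 4^m := one_le_pow₀ (by norm_num)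
    have hp1 : (4:ℤ)^(m+1) = 4*4^m := by ring
    ext s
    simp only [Set.mem_setOf_eq, Set.mem_insert_iff, Set.mem_singleton_iff]
    constructor
    · intro hrep
      obtain ⟨a, b, c, rfl⟩ := Multiset.card_eq_three.mp hrep.1
      rw [repIff] at hrep
      obtain ⟨ha, hb, hc, hsum⟩ := hrep
      rcases shape0 ha hb hc hsum with
          ⟨m', w, hw, hwD, hs⟩ | ⟨a₀, b₀, c₀, ha₀, hb₀, hc₀, rfl, rfl, rfl⟩ |
          ⟨w, hw, h4, hD, hs⟩ | ⟨w, hw, h4, hD, hs⟩ |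
          ⟨v, w, hv, hw, h4v, h4w, hD, hs⟩ | ⟨v, w, hv, hw, h4v, h4w, hD, hs⟩ |
          ⟨hD, hs⟩ | ⟨hD, hs⟩
      · exact absurd (hwD ▸ hw) (notA4_2 (m+1))
      · have hsum' : a₀ + b₀ + c₀ = 2 * 4^m := by omega
        have hmem : ({a₀, b₀, c₀} : Multiset ℤ) ∈ {s : Multiset ℤ | IsRep A4 (2 * 4 ^ m) s} :=
          (repIff _ _ _ _).mpr ⟨ha₀, hb₀, hc₀, hsum'⟩
        rw [ih] at hmem
        simp only [Set.mem_insert_iff, Set.mem_singleton_iff] at hmem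
        rcases hmem with h | h
        · left
          have h5 := congrArg (Multiset.map (fun t => (4:ℤ)*t)) h
          rw [map4triple] at h5
          rw [h5]
          simp only [Multiset.insert_eq_cons, Multiset.map_cons, Multiset.map_singleton]
          rw [show (4:ℤ) * 4^(m+1) = 4^(m+1+1) by ring,
            show (4:ℤ) * -(4^m) = -(4^(m+1)) by ring]
        · right
          have h5 := congrArg (Multiset.map (fun t => (4:ℤ)*t)) h
          rw [map4triple] at h5
          rw [h5]
          simp only [Multiset.insert_eq_cons, Multiset.map_cons, Multiset.map_singleton]
          rw [show (4:ℤ) * 4^m = 4^(m+1) by ring, mul_zero]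
      · omega
      · omega
      · omega
      · omega
      · omega
      · omega
    · intro h
      rcases h with rfl | rfl
      · exact (repIff _ _ _ _).mpr ⟨hApow (m+2), hAnegpow (m+1), hAnegpow (m+1), by ring⟩
      · exact (repIff _ _ _ _).mpr ⟨hApow (m+1), hApow (m+1), hA0, by ring⟩

lemma part3 (n : ℕ) : {s : Multiset ℤ | IsRep A4 (3 * 4 ^ n) s} =
    {({(4 : ℤ) ^ (n + 1), -(4 ^ n), 0} : Multiset ℤ),
     ({(4 : ℤ) ^ n, 4 ^ n, 4 ^ n} : Multiset ℤ)} := by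
  induction n with
  | zero =>
    ext s
    simp only [Set.mem_setOf_eq, Set.mem_insert_iff, Set.mem_singleton_iff]
    constructor
    · intro hrep
      obtain ⟨a, b, c, rfl⟩ := Multiset.card_eq_three.mp hrep.1
      rw [repIff] at hrep
      obtain ⟨ha, hb, hc, hsum⟩ := hrep
      norm_num at hsum
      rcases shape0 ha hb hc hsum with
          ⟨m, w, hw, hwD, hs⟩ | ⟨a₀, b₀, c₀, ha₀, hb₀, hc₀, rfl, rfl, rfl⟩ |
          ⟨w, hw, h4, hD, hs⟩ | ⟨w, hw, h4, hD, hs⟩ |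
          ⟨v, w, hv, hw, h4v, h4w, hD, hs⟩ | ⟨v, w, hv, hw, h4v, h4w, hD, hs⟩ |
          ⟨hD, hs⟩ | ⟨hD, hs⟩
      · exact absurd (hwD ▸ hw) (by have := notA4_3 0; norm_num at this ⊢; exact this)
      · omega
      · omega
      · omega
      · omega
      · rcases hsum4 hv hw h4v h4w (by omega) with ⟨rfl, rfl⟩ | ⟨rfl, rfl⟩
        · left; rw [hs, ms312 (-1) (0:ℤ) (4:ℤ)]; norm_num
        · left; rw [hs, ms12 (-1) (4:ℤ) (0:ℤ)]; norm_num
      · right; rw [hs]; norm_num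
      · omega
    · intro h
      rcases h with rfl | rfl
      · exact (repIff _ _ _ _).mpr ⟨hApow 1, hAnegpow 0, hA0, by norm_num⟩
      · exact (repIff _ _ _ _).mpr ⟨hApow 0, hApow 0, hApow 0, by norm_num⟩
  | succ m ih =>
    have hk : (1:ℤ) ≤ 4^m := one_le_pow₀ (by norm_num)
    have hp1 : (4:ℤ)^(m+1) = 4*4^m := by ring
    ext s
    simp only [Set.mem_setOf_eq, Set.mem_insert_iff, Set.mem_singleton_iff]
    constructor
    · intro hrep
      obtain ⟨a, b, c, rfl⟩ := Multiset.card_eq_three.mp hrep.1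
      rw [repIff] at hrep
      obtain ⟨ha, hb, hc, hsum⟩ := hrep
      rcases shape0 ha hb hc hsum with
          ⟨m', w, hw, hwD, hs⟩ | ⟨a₀, b₀, c₀, ha₀, hb₀, hc₀, rfl, rfl, rfl⟩ |
          ⟨w, hw, h4, hD, hs⟩ | ⟨w, hw, h4, hD, hs⟩ |
          ⟨v, w, hv, hw, h4v, h4w, hD, hs⟩ | ⟨v, w, hv, hw, h4v, h4w, hD, hs⟩ |
          ⟨hD, hs⟩ | ⟨hD, hs⟩
      · exact absurd (hwD ▸ hw) (notA4_3 (m+1))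
      · have hsum' : a₀ + b₀ + c₀ = 3 * 4^m := by omega
        have hmem : ({a₀, b₀, c₀} : Multiset ℤ) ∈ {s : Multiset ℤ | IsRep A4 (3 * 4 ^ m) s} :=
          (repIff _ _ _ _).mpr ⟨ha₀, hb₀, hc₀, hsum'⟩
        rw [ih] at hmem
        simp only [Set.mem_insert_iff, Set.mem_singleton_iff] at hmem
        rcases hmem with h | h
        · left
          have h5 := congrArg (Multiset.map (fun t => (4:ℤ)*t)) h
          rw [map4triple] at h5
          rw [h5]
          simp only [Multiset.insert_eq_cons, Multiset.map_cons, Multiset.map_singleton]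
          rw [show (4:ℤ) * 4^(m+1) = 4^(m+1+1) by ring,
            show (4:ℤ) * -(4^m) = -(4^(m+1)) by ring, mul_zero]
        · right
          have h5 := congrArg (Multiset.map (fun t => (4:ℤ)*t)) h
          rw [map4triple] at h5
          rw [h5]
          simp only [Multiset.insert_eq_cons, Multiset.map_cons, Multiset.map_singleton]
          rw [show (4:ℤ) * 4^m = 4^(m+1) by ring]
      · omega
      · omega
      · omega
      · omega
      · omega
      · omega
    · intro h
      rcases h with rfl | rfl
      · exact (repIff _ _ _ _).mpr ⟨hApow (m+2), hAnegpow (m+1), hA0, by ring⟩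
      · exact (repIff _ _ _ _).mpr ⟨hApow (m+1), hApow (m+1), hApow (m+1), by ring⟩
lemma part1 : {D : ℤ | IsP3Exception A4 D} =
    {D : ℤ | ∃ n : ℕ, D = 2 * 4 ^ n ∨ D = -(2 * 4 ^ n) ∨ D = 3 * 4 ^ n ∨ D = -(3 * 4 ^ n)} := by
  ext D
  simp only [Set.mem_setOf_eq]
  constructor
  · rintro ⟨s, t, hs, ht, hns, hnt, hst⟩
    obtain ⟨x, y, z, rfl⟩ := Multiset.card_eq_three.mp hs.1
    obtain ⟨x', y', z', rfl⟩ := Multiset.card_eq_three.mp ht.1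
    rw [repIff] at hs ht
    obtain ⟨hx, hy, hz, h1⟩ := hs
    obtain ⟨hx', hy', hz', h2⟩ := ht
    rcases masterT D.natAbs D x y z x' y' z' le_rfl hx hy hz hx' hy' hz' h1 h2 hns hnt with
        heq | hE
    · exact absurd heq hst
    · exact hE
  · rintro ⟨n, h⟩
    have hk : (1:ℤ) ≤ 4^n := one_le_pow₀ (by norm_num)
    have hp : (4:ℤ)^(n+1) = 4*4^n := by ring
    rcases h with rfl | rfl | rfl | rfl
    · refine ⟨{4^(n+1), -(4^n), -(4^n)}, {4^n, 4^n, 0},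
        (repIff _ _ _ _).mpr ⟨hApow (n+1), hAnegpow n, hAnegpow n, by ring⟩,
        (repIff _ _ _ _).mpr ⟨hApow n, hApow n, hA0, by ring⟩, ?_, ?_, ?_⟩
      · rw [trivIff]; omega
      · rw [trivIff]; omega
      · intro h
        have h0 : (0:ℤ) ∈ ({(4:ℤ)^(n+1), -(4^n), -(4^n)} : Multiset ℤ) := by rw [h]; simp
        simp only [Multiset.insert_eq_cons, Multiset.mem_cons, Multiset.mem_singleton] at h0
        omega
    · refine ⟨{-(4^(n+1)), 4^n, 4^n}, {-(4^n), -(4^n), 0},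
        (repIff _ _ _ _).mpr ⟨hAnegpow (n+1), hApow n, hApow n, by ring⟩,
        (repIff _ _ _ _).mpr ⟨hAnegpow n, hAnegpow n, hA0, by ring⟩, ?_, ?_, ?_⟩
      · rw [trivIff]; omega
      · rw [trivIff]; omega
      · intro h
        have h0 : (0:ℤ) ∈ ({-((4:ℤ)^(n+1)), 4^n, 4^n} : Multiset ℤ) := by rw [h]; simp
        simp only [Multiset.insert_eq_cons, Multiset.mem_cons, Multiset.mem_singleton] at h0
        omega
    · refine ⟨{4^(n+1), -(4^n), 0}, {4^n, 4^n, 4^n},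
        (repIff _ _ _ _).mpr ⟨hApow (n+1), hAnegpow n, hA0, by ring⟩,
        (repIff _ _ _ _).mpr ⟨hApow n, hApow n, hApow n, by ring⟩, ?_, ?_, ?_⟩
      · rw [trivIff]; omega
      · rw [trivIff]; omega
      · intro h
        have h0 : (0:ℤ) ∈ ({(4:ℤ)^n, 4^n, 4^n} : Multiset ℤ) := by rw [← h]; simp
        simp only [Multiset.insert_eq_cons, Multiset.mem_cons, Multiset.mem_singleton] at h0
        omega
    · refine ⟨{-(4^(n+1)), 4^n, 0}, {-(4^n), -(4^n), -(4^n)},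
        (repIff _ _ _ _).mpr ⟨hAnegpow (n+1), hApow n, hA0, by ring⟩,
        (repIff _ _ _ _).mpr ⟨hAnegpow n, hAnegpow n, hAnegpow n, by ring⟩, ?_, ?_, ?_⟩
      · rw [trivIff]; omega
      · rw [trivIff]; omega
      · intro h
        have h0 : (0:ℤ) ∈ ({-((4:ℤ)^n), -(4^n), -(4^n)} : Multiset ℤ) := by rw [← h]; simp
        simp only [Multiset.insert_eq_cons, Multiset.mem_cons, Multiset.mem_singleton] at h0
        omega


theorem stmt_6 :
    {D : ℤ | IsP3Exception A4 D} =
      {D : ℤ | ∃ n : ℕ, D = 2 * 4 ^ n ∨ D = -(2 * 4 ^ n) ∨ D = 3 * 4 ^ n ∨ D = -(3 * 4 ^ n)} ∧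
    (∀ n : ℕ, {s : Multiset ℤ | IsRep A4 (2 * 4 ^ n) s} =
      {({(4 : ℤ) ^ (n + 1), -(4 ^ n), -(4 ^ n)} : Multiset ℤ),
       ({(4 : ℤ) ^ n, 4 ^ n, 0} : Multiset ℤ)}) ∧
    (∀ n : ℕ, {s : Multiset ℤ | IsRep A4 (3 * 4 ^ n) s} =
      {({(4 : ℤ) ^ (n + 1), -(4 ^ n), 0} : Multiset ℤ),
       ({(4 : ℤ) ^ n, 4 ^ n, 4 ^ n} : Multiset ℤ)}) := by
  exact ⟨part1, part2, part3⟩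
end

section
/- Let {λₙ} be non-negative integers with λ₀ = 0, λ₁ > 0, and λₙ₊₁ > 3λₙ for n ≥ 1, and A = {±λₙ}. If n₁, n₂, n₃, m₁ ∈ A satisfy |n₁| > |n₂| > |n₃| ≥ 0, m₁ ≠ 0, and n₁ + n₂ + n₃ = 2m₁, then (|n₁|, |n₂|, |n₃|) = (3|m₁| + λₖ, |m₁|, λₖ) for some index k with 0 < λₖ < |m₁|; in particular |m₁| > 3. -/
theorem stmt_7 (lam : ℕ → ℕ) (h0 : lam 0 = 0) (h1 : 0 < lam 1)
    (hlac : ∀ n, 1 ≤ n → 3 * lam n < lam (n + 1))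
    (n₁ n₂ n₃ m₁ : ℤ)
    (hn₁ : n₁ ∈ lacSet lam) (hn₂ : n₂ ∈ lacSet lam) (hn₃ : n₃ ∈ lacSet lam)
    (hm₁ : m₁ ∈ lacSet lam)
    (habs : |n₁| > |n₂| ∧ |n₂| > |n₃| ∧ |n₃| ≥ 0)
    (hm₁ne : m₁ ≠ 0)
    (hsum : n₁ + n₂ + n₃ = 2 * m₁) :
    (∃ k : ℕ, 0 < lam k ∧ (lam k : ℤ) < |m₁| ∧
      |n₁| = 3 * |m₁| + (lam k : ℤ) ∧ |n₂| = |m₁| ∧ |n₃| = (lam k : ℤ)) ∧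
    3 < |m₁| := by
  obtain ⟨habs1, habs2, -⟩ := habs
  have hmono : StrictMono lam := by
    apply strictMono_nat_of_lt_succ
    intro n
    cases n with
    | zero => simpa [h0] using h1
    | succ k => have := hlac (k + 1) (by omega); omega
  have keyv : ∀ i j : ℕ, lam i < lam j → 3 * lam i < lam j := by
    intro i j hij
    have hij' : i < j := hmono.lt_iff_lt.mp hij
    rcases Nat.eq_zero_or_pos i with hi | hi
    · subst hi; omega
    · have h3 := hlac i hi
      have h4 : lam (i + 1) ≤ lam j := hmono.monotone (by omega)
      omega
  have habs' : ∀ x ∈ lacSet lam, ∃ n, |x| = (lam n : ℤ) := by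
    rintro x ⟨n, h | h⟩ <;> subst h
    · exact ⟨n, abs_of_nonneg (Int.natCast_nonneg _)⟩
    · exact ⟨n, by rw [abs_neg]; exact abs_of_nonneg (Int.natCast_nonneg _)⟩
  obtain ⟨a, ha⟩ := habs' n₁ hn₁
  obtain ⟨b, hb⟩ := habs' n₂ hn₂
  obtain ⟨p, hp⟩ := habs' n₃ hn₃
  obtain ⟨c, hc⟩ := habs' m₁ hm₁
  have hD : 0 < lam c := by
    have h' : 0 < |m₁| := abs_pos.mpr hm₁ne
    rw [hc] at h'; exact_mod_cast h'
  have hab : (lam b : ℤ) < lam a := by rw [ha, hb] at habs1; exact habs1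
  have hbp : (lam p : ℤ) < lam b := by rw [hb, hp] at habs2; exact habs2
  have fAB : 3 * lam b < lam a := keyv b a (by exact_mod_cast hab)
  have fBC : 3 * lam p < lam b := keyv p b (by exact_mod_cast hbp)
  have tDB : 3 * lam c < lam b ∨ lam c = lam b ∨ 3 * lam b < lam c := by
    rcases lt_trichotomy (lam c) (lam b) with h | h | h
    · exact Or.inl (keyv _ _ h)
    · exact Or.inr (Or.inl h)
    · exact Or.inr (Or.inr (keyv _ _ h))
  have tDA : 3 * lam c < lam a ∨ lam c = lam a ∨ 3 * lam a < lam c := by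
    rcases lt_trichotomy (lam c) (lam a) with h | h | h
    · exact Or.inl (keyv _ _ h)
    · exact Or.inr (Or.inl h)
    · exact Or.inr (Or.inr (keyv _ _ h))
  have e1 : n₁ = (lam a : ℤ) ∨ n₁ = -(lam a : ℤ) := by
    rcases abs_choice n₁ with h | h <;> rw [ha] at h <;> [left; right] <;> omega
  have e2 : n₂ = (lam b : ℤ) ∨ n₂ = -(lam b : ℤ) := by
    rcases abs_choice n₂ with h | h <;> rw [hb] at h <;> [left; right] <;> omega
  have e3 : n₃ = (lam p : ℤ) ∨ n₃ = -(lam p : ℤ) := by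
    rcases abs_choice n₃ with h | h <;> rw [hp] at h <;> [left; right] <;> omega
  have e4 : m₁ = (lam c : ℤ) ∨ m₁ = -(lam c : ℤ) := by
    rcases abs_choice m₁ with h | h <;> rw [hc] at h <;> [left; right] <;> omega
  rw [ha, hb, hp, hc]
  rcases e1 with rfl | rfl <;> rcases e2 with rfl | rfl <;>
    rcases e3 with rfl | rfl <;> rcases e4 with rfl | rfl <;>
    exact ⟨⟨p, by omega, by omega, by omega, by omega, rfl⟩, by omega⟩
end

section
/- Let q ≥ 3 be a real number and {λₙ}ₙ≥₀ a sequence of non-negative integers with λ₀ = 0 and λₙ₊₁ > q·λₙ for n ≥ 1, λ₁ > 0. Suppose positive integers satisfy λ_{α₁} + ⋯ + λ_{α_k} = λ_{β₁} + ⋯ + λ_{β_l} > 0 with k + l ≤ 6 and k, l ≥ 1. If max{λ_{α₁},…,λ_{α_k}} = λ_{n+1} > λ_s = max{λ_{β₁},…,λ_{β_l}}, then s = n. -/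
theorem stmt_8 (q : ℝ) (hq : 3 ≤ q) (lam : ℕ → ℕ)
    (h0 : lam 0 = 0) (h1 : 0 < lam 1)
    (hlac : ∀ n, 1 ≤ n → q * (lam n : ℝ) < (lam (n + 1) : ℝ))
    (k l : ℕ) (hk : 1 ≤ k) (hl : 1 ≤ l) (hkl : k + l ≤ 6)
    (α : Fin k → ℕ) (β : Fin l → ℕ)
    (hsum : ∑ i, lam (α i) = ∑ j, lam (β j))
    (hpos : 0 < ∑ i, lam (α i))
    (n s : ℕ)
    (hmaxα : (Finset.univ.sup fun i => lam (α i)) = lam (n + 1))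
    (hmaxβ : (Finset.univ.sup fun j => lam (β j)) = lam s)
    (hlt : lam s < lam (n + 1)) :
    s = n := by
  -- key growth: 3 * lam m < lam (m+1) for m ≥ 1
  have hgrow : ∀ m, 1 ≤ m → 3 * lam m < lam (m + 1) := by
    intro m hm
    have h := hlac m hm
    have h3 : (3 : ℝ) * (lam m : ℕ) ≤ q * (lam m : ℕ) := by
      apply mul_le_mul_of_nonneg_right hq (by positivity)
    have : ((3 * lam m : ℕ) : ℝ) < ((lam (m + 1) : ℕ) : ℝ) := by
      push_cast
      linarith
    exact_mod_cast this
  have hstep : ∀ m, 1 ≤ m → lam m < lam (m + 1) := by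
    intro m hm
    have := hgrow m hm
    omega
  have hmono : ∀ a b, 1 ≤ a → a ≤ b → lam a ≤ lam b := by
    intro a b ha hab
    induction b with
    | zero => omega
    | succ b ih =>
      rcases Nat.lt_or_ge a (b + 1) with h | h
      · have hb : 1 ≤ b := by omega
        exact (ih (by omega)).trans (hstep b hb).le
      · have : a = b + 1 := by omega
        rw [this]
  -- lam s > 0
  have hsumβ : ∑ j, lam (β j) ≤ l * lam s := by
    calc ∑ j, lam (β j) ≤ Finset.univ.card • lam s := by
          apply Finset.sum_le_card_nsmul
          intro j _
          rw [← hmaxβ]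
          exact Finset.le_sup (f := fun j => lam (β j)) (Finset.mem_univ j)
      _ = l * lam s := by simp [Finset.card_univ]
  have hls : 0 < lam s := by
    rw [hsum] at hpos
    by_contra h
    push_neg at h
    interval_cases h' : lam s <;> omega
  have hs1 : 1 ≤ s := by
    by_contra h
    push_neg at h
    interval_cases s
    omega
  -- s ≤ n
  have hsle : s ≤ n := by
    by_contra h
    push_neg at h
    have : lam (n + 1) ≤ lam s := hmono (n + 1) s (by omega) (by omega)
    omega
  -- lam (n+1) ≤ 5 * lam s
  haveI : Nonempty (Fin k) := ⟨⟨0, hk⟩⟩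
  obtain ⟨i, _, hi⟩ := Finset.exists_mem_eq_sup (Finset.univ : Finset (Fin k))
    (Finset.univ_nonempty) (fun i => lam (α i))
  have hle1 : lam (n + 1) ≤ ∑ i, lam (α i) := by
    rw [← hmaxα, hi]
    exact Finset.single_le_sum (f := fun i => lam (α i)) (fun j _ => Nat.zero_le _) (Finset.mem_univ i)
  have h5 : lam (n + 1) ≤ 5 * lam s := by
    have hl5 : l ≤ 5 := by omega
    calc lam (n + 1) ≤ ∑ j, lam (β j) := hsum ▸ hle1
      _ ≤ l * lam s := hsumβ
      _ ≤ 5 * lam s := Nat.mul_le_mul_right _ hl5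
  -- conclude
  by_contra hne
  have hslt : s + 1 ≤ n := by omega
  have h1' : 3 * lam s < lam (s + 1) := hgrow s hs1
  have h2' : lam (s + 1) ≤ lam n := hmono (s + 1) n (by omega) hslt
  have h3' : 3 * lam n < lam (n + 1) := hgrow n (by omega)
  omega
end

section
/- Let {λₙ} be non-negative integers with λ₀ = 0, λ₁ > 0, λₙ₊₁ > 3λₙ for n ≥ 1, and A = {±λₙ}. If D is a P(3) exception in A + A + A with D > 0, then there exists n ≥ 1 with λₙ < D < λₙ₊₁; in particular, no P(3) exception belongs to A itself. -/
lemma lam_strictMono (lam : ℕ → ℕ) (h0 : lam 0 = 0) (h1 : 0 < lam 1)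
    (hlac : ∀ n, 1 ≤ n → 3 * lam n < lam (n + 1)) : StrictMono lam := by
  apply strictMono_nat_of_lt_succ
  intro n
  cases n with
  | zero => simpa [h0] using h1
  | succ m => have := hlac (m + 1) (by omega); omega

lemma neg_mem_lacSet (lam : ℕ → ℕ) {x : ℤ} (hx : x ∈ lacSet lam) :
    -x ∈ lacSet lam := by
  obtain ⟨n, hn | hn⟩ := hx
  · exact ⟨n, Or.inr (by omega)⟩
  · exact ⟨n, Or.inl (by omega)⟩

/-- If `x ∈ A` and `x < λ_N` then `x ≤ λ_{N-1}`. -/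
lemma mem_bound (lam : ℕ → ℕ) (hmono : StrictMono lam)
    {x : ℤ} (hx : x ∈ lacSet lam) {N : ℕ} (hlt : x < (lam N : ℤ)) :
    x ≤ (lam (N - 1) : ℤ) := by
  obtain ⟨j, hj | hj⟩ := hx
  · subst hj
    have hjN : j < N := by
      have : lam j < lam N := by exact_mod_cast hlt
      exact hmono.lt_iff_lt.mp this
    exact_mod_cast hmono.monotone (by omega : j ≤ N - 1)
  · subst hj
    have : (0 : ℤ) ≤ (lam (N - 1) : ℤ) := by positivity
    omega

/-- Core structural lemma for a nontrivial representation, assuming `a` has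
maximal absolute value. -/
lemma core (lam : ℕ → ℕ) (h0 : lam 0 = 0) (h1 : 0 < lam 1)
    (hlac : ∀ n, 1 ≤ n → 3 * lam n < lam (n + 1))
    (D a b c : ℤ) (hDpos : 0 < D)
    (ha : a ∈ lacSet lam) (hb : b ∈ lacSet lam) (hc : c ∈ lacSet lam)
    (hsum : a + b + c = D)
    (hab : a + b ≠ 0) (hac : a + c ≠ 0) (hbc : b + c ≠ 0)
    (hba : |b| ≤ |a|) (hca : |c| ≤ |a|) :
    ∃ N : ℕ, 1 ≤ N ∧ D ≤ 3 * (lam N : ℤ) ∧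
      (lam N : ℤ) ≤ D + 2 * (lam (N - 1) : ℤ) ∧ D ≠ (lam N : ℤ) := by
  have hmono := lam_strictMono lam h0 h1 hlac
  rcases lt_or_ge a 0 with haneg | hanonneg
  · -- a < 0 : contradiction
    exfalso
    obtain ⟨i, hi | hi⟩ := ha
    · have : (0 : ℤ) ≤ (lam i : ℤ) := by positivity
      omega
    -- a = -λ_i, λ_i > 0, i ≥ 1
    have hlip : (0 : ℤ) < (lam i : ℤ) := by omega
    have hi1 : 1 ≤ i := by
      by_contra h
      have : i = 0 := by omega
      simp [this, h0] at hlip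
    have habs : |a| = (lam i : ℤ) := by rw [hi]; simp [abs_of_pos hlip]
    have hbi : b ≤ (lam (i - 1) : ℤ) := by
      apply mem_bound lam hmono hb
      have : b ≤ (lam i : ℤ) := le_trans (le_abs_self b) (habs ▸ hba)
      have hbne : b ≠ (lam i : ℤ) := by intro h; apply hab; omega
      omega
    have hci : c ≤ (lam (i - 1) : ℤ) := by
      apply mem_bound lam hmono hc
      have : c ≤ (lam i : ℤ) := le_trans (le_abs_self c) (habs ▸ hca)
      have hcne : c ≠ (lam i : ℤ) := by intro h; apply hac; omega
      omega
    have hkey : 2 * lam (i - 1) < lam i := by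
      rcases Nat.eq_or_lt_of_le hi1 with h | h
      · simp [← h, h0]; omega
      · have := hlac (i - 1) (by omega)
        have : 3 * lam (i - 1) < lam i := by
          have heq : i - 1 + 1 = i := by omega
          rwa [heq] at this
        omega
    have hkey' : 2 * (lam (i - 1) : ℤ) < (lam i : ℤ) := by exact_mod_cast hkey
    omega
  · -- a ≥ 0 : a = λ_i with i ≥ 1
    have ha' : ∃ i : ℕ, a = (lam i : ℤ) := by
      obtain ⟨i, hi | hi⟩ := ha
      · exact ⟨i, hi⟩
      · have : (0 : ℤ) ≤ (lam i : ℤ) := by positivity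
        exact ⟨0, by simp [h0]; omega⟩
    obtain ⟨i, hi⟩ := ha'
    have habs : |a| = (lam i : ℤ) := by rw [hi]; simp
    have hapos : 0 < a := by
      rcases lt_or_ge 0 a with h | h
      · exact h
      · exfalso
        have ha0 : a = 0 := by omega
        have hb0 : b = 0 := by have := hba; rw [habs] at this; simp [ha0, ← hi] at this ⊢; omega
        have hc0 : c = 0 := by have := hca; rw [habs] at this; simp [ha0, ← hi] at this ⊢; omega
        omega
    have hi1 : 1 ≤ i := by
      by_contra h
      have : i = 0 := by omega
      rw [this, h0] at hi; simp at hi; omega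
    refine ⟨i, hi1, ?_, ?_, ?_⟩
    · -- D ≤ 3 λ_i
      have hb' : b ≤ (lam i : ℤ) := le_trans (le_abs_self b) (habs ▸ hba)
      have hc' : c ≤ (lam i : ℤ) := le_trans (le_abs_self c) (habs ▸ hca)
      omega
    · -- λ_i ≤ D + 2 λ_{i-1}
      have hbi : -b ≤ (lam (i - 1) : ℤ) := by
        apply mem_bound lam hmono (neg_mem_lacSet lam hb)
        have : -b ≤ (lam i : ℤ) := le_trans (neg_le_abs b) (habs ▸ hba)
        have hbne : b ≠ -(lam i : ℤ) := by intro h; apply hab; omega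
        omega
      have hci : -c ≤ (lam (i - 1) : ℤ) := by
        apply mem_bound lam hmono (neg_mem_lacSet lam hc)
        have : -c ≤ (lam i : ℤ) := le_trans (neg_le_abs c) (habs ▸ hca)
        have hcne : c ≠ -(lam i : ℤ) := by intro h; apply hac; omega
        omega
      omega
    · intro h; apply hbc; omega

lemma pair_le_triple₁ (a b c : ℤ) : ({a, b} : Multiset ℤ) ≤ {a, b, c} :=
  Multiset.cons_le_cons a (Multiset.cons_le_cons b (Multiset.zero_le _))

lemma pair_le_triple₂ (a b c : ℤ) : ({a, c} : Multiset ℤ) ≤ {a, b, c} :=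
  Multiset.cons_le_cons a (Multiset.le_cons_self _ _)

lemma pair_le_triple₃ (a b c : ℤ) : ({b, c} : Multiset ℤ) ≤ {a, b, c} :=
  Multiset.le_cons_self _ _

lemma nontrivial_pairs {a b c : ℤ} (h : ¬ TrivialTriple {a, b, c}) :
    a + b ≠ 0 ∧ a + c ≠ 0 ∧ b + c ≠ 0 := by
  refine ⟨?_, ?_, ?_⟩
  · intro he
    apply h
    refine ⟨a, ?_⟩
    have hb' : b = -a := by omega
    rw [hb']
    exact pair_le_triple₁ a (-a) c
  · intro he
    apply h
    refine ⟨a, ?_⟩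
    have hc' : c = -a := by omega
    rw [hc']
    exact pair_le_triple₂ a b (-a)
  · intro he
    apply h
    refine ⟨b, ?_⟩
    have hc' : c = -b := by omega
    rw [hc']
    exact pair_le_triple₃ a b (-b)

theorem stmt_14 (lam : ℕ → ℕ) (h0 : lam 0 = 0) (h1 : 0 < lam 1)
    (hlac : ∀ n, 1 ≤ n → 3 * lam n < lam (n + 1))
    (D : ℤ) (hD : IsP3Exception (lacSet lam) D) (hDpos : 0 < D) :
    (∃ n : ℕ, 1 ≤ n ∧ (lam n : ℤ) < D ∧ D < (lam (n + 1) : ℤ)) ∧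
      D ∉ lacSet lam := by
  have hmono := lam_strictMono lam h0 h1 hlac
  obtain ⟨s, t, hs, ht, hns, hnt, hst⟩ := hD
  obtain ⟨a, b, c, rfl⟩ := Multiset.card_eq_three.mp hs.1
  have hmem := hs.2.1
  have ha : a ∈ lacSet lam := hmem a (by simp)
  have hb : b ∈ lacSet lam := hmem b (by simp)
  have hc : c ∈ lacSet lam := hmem c (by simp)
  have hsum : a + b + c = D := by
    have := hs.2.2; simpa [add_assoc] using this
  obtain ⟨hab, hac, hbc⟩ := nontrivial_pairs hns
  -- find N via core, doing case analysis on which of a,b,c has max |·|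
  have hN : ∃ N : ℕ, 1 ≤ N ∧ D ≤ 3 * (lam N : ℤ) ∧
      (lam N : ℤ) ≤ D + 2 * (lam (N - 1) : ℤ) ∧ D ≠ (lam N : ℤ) := by
    rcases le_total |b| |a| with h1' | h1'
    · rcases le_total |c| |a| with h2' | h2'
      · exact core lam h0 h1 hlac D a b c hDpos ha hb hc hsum hab hac hbc h1' h2'
      · rcases le_total |b| |c| with h3' | h3'
        · exact core lam h0 h1 hlac D c a b hDpos hc ha hb (by omega)
            (by omega) (by omega) (by omega) h2' (by omega)
        · exact core lam h0 h1 hlac D c a b hDpos hc ha hb (by omega)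
            (by omega) (by omega) (by omega) h2' (by omega)
    · rcases le_total |c| |b| with h2' | h2'
      · exact core lam h0 h1 hlac D b a c hDpos hb ha hc (by omega)
          (by omega) (by omega) (by omega) h1' h2'
      · exact core lam h0 h1 hlac D c a b hDpos hc ha hb (by omega)
          (by omega) (by omega) (by omega) (by omega) h2'
  obtain ⟨N, hN1, hN2, hN3, hN4⟩ := hN
  have hmain : ∃ n : ℕ, 1 ≤ n ∧ (lam n : ℤ) < D ∧ D < (lam (n + 1) : ℤ) := by
    rcases lt_or_gt_of_ne hN4 with hlt | hgt
    · -- D < λ_N : then N ≥ 2 and λ_{N-1} < D < λ_N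
      have hN2' : 2 ≤ N := by
        by_contra h
        have : N = 1 := by omega
        subst this
        simp [h0] at hN3
        omega
      have hlacN : 3 * lam (N - 1) < lam N := by
        have := hlac (N - 1) (by omega)
        have heq : N - 1 + 1 = N := by omega
        rwa [heq] at this
      have hlacN' : 3 * (lam (N - 1) : ℤ) < (lam N : ℤ) := by exact_mod_cast hlacN
      refine ⟨N - 1, by omega, by omega, ?_⟩
      have heq : N - 1 + 1 = N := by omega
      rw [heq]; omega
    · -- λ_N < D : then λ_N < D < λ_{N+1}
      have hlacN : 3 * lam N < lam (N + 1) := hlac N hN1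
      have hlacN' : 3 * (lam N : ℤ) < (lam (N + 1) : ℤ) := by exact_mod_cast hlacN
      exact ⟨N, hN1, hgt, by omega⟩
  refine ⟨hmain, ?_⟩
  obtain ⟨n, hn1, hn2, hn3⟩ := hmain
  rintro ⟨k, hk | hk⟩
  · have hnk : n < k := by
      have : lam n < lam k := by exact_mod_cast hk ▸ hn2
      exact hmono.lt_iff_lt.mp this
    have hkn : k < n + 1 := by
      have : lam k < lam (n + 1) := by exact_mod_cast hk ▸ hn3
      exact hmono.lt_iff_lt.mp this
    omega
  · have : (0 : ℤ) ≤ (lam k : ℤ) := by positivity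
    omega
end
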